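/- arXiv:2509.24201 — 9 statements merged into one kernel-verified Lean document; each statement's English description precedes it below -/
import Mathlib

section
/- For real numbers a > 0 and p > 0, the integral ∫₀^∞ t^{-1/2} exp(-p t - a/(4t)) dt equals √(π/p) · exp(-√(a p)). -/
open MeasureTheory Real Set Filter

/-- Modified Bessel function of the second kind, via its integral representation. -/
noncomputable def besselK (ν z : ℝ) : ℝ :=
  2 ^ (ν - 1) * ∫ t in Set.Ioi (0:ℝ), t ^ (ν - 1) * Real.exp (-z * t - z / (4 * t))

/-- Lognormal density with parameters m (log-mean) and v (log-variance). -/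
noncomputable def lognormalPdf (m v x : ℝ) : ℝ :=
  (1 / (Real.sqrt (2 * π * v) * x)) * Real.exp (-(Real.log x - m) ^ 2 / (2 * v))

noncomputable def gfun (α β u : ℝ) : ℝ := Real.exp (-(α * u - β / u) ^ 2)

section
variable {α β : ℝ}

lemma gfun_integrableOn (hα : 0 < α) (hβ : 0 < β) :
    IntegrableOn (gfun α β) (Set.Ioi (0:ℝ)) := by
  have hbound : ∀ u ∈ Set.Ioi (0:ℝ),
      ‖gfun α β u‖ ≤ Real.exp (2 * α * β) * Real.exp (-(α^2) * u^2) := by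
    intro u hu
    have hu' : (0:ℝ) < u := hu
    rw [gfun, Real.norm_eq_abs, abs_of_pos (Real.exp_pos _), ← Real.exp_add]
    apply Real.exp_le_exp.2
    have h1 : (α * u - β / u) ^ 2 = α^2 * u^2 - 2 * α * β + (β/u)^2 := by
      field_simp; ring
    nlinarith [sq_nonneg (β / u)]
  have hint : IntegrableOn (fun u : ℝ => Real.exp (2 * α * β) * Real.exp (-(α^2) * u^2))
      (Set.Ioi (0:ℝ)) := by
    exact ((integrable_exp_neg_mul_sq (by positivity : (0:ℝ) < α^2)).const_mul
      _).integrableOn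
  refine Integrable.mono' hint ?_ ?_
  · have hc : ContinuousOn (gfun α β) (Set.Ioi (0:ℝ)) := by
      apply ContinuousOn.rexp
      apply ContinuousOn.neg
      apply ContinuousOn.pow
      exact (continuousOn_const.mul continuousOn_id).sub
        (continuousOn_const.div continuousOn_id (fun u hu => ne_of_gt hu))
    exact hc.aestronglyMeasurable measurableSet_Ioi
  · filter_upwards [ae_restrict_mem measurableSet_Ioi] with u hu using hbound u hu

lemma phi_deriv (hα : 0 < α) (hβ : 0 < β) :
    ∀ u ∈ Set.Ioi (0:ℝ), HasDerivWithinAt (fun u : ℝ => β / α * u⁻¹)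
      (β / α * (-(u^2)⁻¹)) (Set.Ioi (0:ℝ)) u := by
  intro u hu
  exact ((hasDerivAt_inv (ne_of_gt hu)).const_mul (β/α)).hasDerivWithinAt

lemma phi_inj (hα : 0 < α) (hβ : 0 < β) :
    Set.InjOn (fun u : ℝ => β / α * u⁻¹) (Set.Ioi (0:ℝ)) := by
  intro u hu v hv h
  have hba : β / α ≠ 0 := ne_of_gt (by positivity)
  have := mul_left_cancel₀ hba h
  exact inv_injective this

lemma phi_image (hα : 0 < α) (hβ : 0 < β) :
    (fun u : ℝ => β / α * u⁻¹) '' (Set.Ioi (0:ℝ)) = Set.Ioi (0:ℝ) := by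
  ext x
  constructor
  · rintro ⟨y, hy, rfl⟩
    have : (0:ℝ) < y := hy
    exact mem_Ioi.2 (by positivity)
  · intro hx
    have hx' : (0:ℝ) < x := hx
    refine ⟨β / α * x⁻¹, mem_Ioi.2 (by positivity), ?_⟩
    field_simp

lemma phi_gfun (hα : 0 < α) (hβ : 0 < β) {u : ℝ} (hu : 0 < u) :
    gfun α β (β / α * u⁻¹) = gfun α β u := by
  unfold gfun
  congr 1
  have h : α * (β / α * u⁻¹) - β / (β / α * u⁻¹) = -(α * u - β / u) := by
    field_simp
    ring
  rw [h]
  ring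

lemma key_cv (hα : 0 < α) (hβ : 0 < β) :
    ∫ u in Set.Ioi (0:ℝ), gfun α β u
      = ∫ u in Set.Ioi (0:ℝ), (β / α * u⁻¹^2) * gfun α β u := by
  have := integral_image_eq_integral_abs_deriv_smul measurableSet_Ioi
    (phi_deriv hα hβ) (phi_inj hα hβ) (gfun α β)
  rw [phi_image hα hβ] at this
  rw [this]
  refine setIntegral_congr_fun measurableSet_Ioi fun u hu => ?_
  have hu' : (0:ℝ) < u := hu
  rw [phi_gfun hα hβ hu', smul_eq_mul]
  congr 1
  rw [abs_mul, abs_neg, abs_of_pos (by positivity : (0:ℝ) < β / α),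
    abs_of_pos (by positivity : (0:ℝ) < ((u:ℝ)^2)⁻¹), inv_pow]

end

section
variable {α β : ℝ}

lemma ffun_deriv (hα : 0 < α) (hβ : 0 < β) :
    ∀ u ∈ Set.Ioi (0:ℝ), HasDerivWithinAt (fun u : ℝ => α * u - β * u⁻¹)
      (α + β * (u^2)⁻¹) (Set.Ioi (0:ℝ)) u := by
  intro u hu
  have h1 : HasDerivAt (fun u : ℝ => α * u - β * u⁻¹) (α * 1 - β * (-(u^2)⁻¹)) u :=
    ((hasDerivAt_id u).const_mul α).sub ((hasDerivAt_inv (ne_of_gt hu)).const_mul β)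
  have : α * 1 - β * (-(u^2)⁻¹) = α + β * (u^2)⁻¹ := by ring
  exact (this ▸ h1).hasDerivWithinAt

lemma ffun_inj (hα : 0 < α) (hβ : 0 < β) :
    Set.InjOn (fun u : ℝ => α * u - β * u⁻¹) (Set.Ioi (0:ℝ)) := by
  have : StrictMonoOn (fun u : ℝ => α * u - β * u⁻¹) (Set.Ioi (0:ℝ)) := by
    intro u hu v hv huv
    have hu' : (0:ℝ) < u := hu
    have hv' : (0:ℝ) < v := hv
    have h1 : α * u < α * v := by nlinarith
    have h2 : v⁻¹ < u⁻¹ := by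
      rw [inv_lt_inv₀ hv' hu']; exact huv
    have h3 : β * v⁻¹ < β * u⁻¹ := by nlinarith
    simp only
    linarith
  exact this.injOn

lemma ffun_image (hα : 0 < α) (hβ : 0 < β) :
    (fun u : ℝ => α * u - β * u⁻¹) '' (Set.Ioi (0:ℝ)) = Set.univ := by
  refine Set.eq_univ_of_forall fun v => ?_
  set s0 := Real.sqrt (v^2 + 4*α*β) with hs0def
  have hs0sq : s0^2 = v^2 + 4*α*β := Real.sq_sqrt (by positivity)
  have hs0nn : 0 ≤ s0 := Real.sqrt_nonneg _
  have habs : |v| < s0 := by nlinarith [sq_abs v, abs_nonneg v]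
  have hvpos : 0 < v + s0 := by
    have := neg_abs_le v
    linarith
  refine ⟨(v + s0) / (2*α), mem_Ioi.2 (by positivity), ?_⟩
  have h2α : (2*α) ≠ 0 := by positivity
  field_simp
  nlinarith [hs0sq]

lemma gfun_total (hα : 0 < α) (hβ : 0 < β) :
    ∫ u in Set.Ioi (0:ℝ), (α + β / u^2) * gfun α β u = Real.sqrt π := by
  have hg := integral_image_eq_integral_abs_deriv_smul measurableSet_Ioi
    (ffun_deriv hα hβ) (ffun_inj hα hβ) (fun v => Real.exp (-v^2))
  rw [ffun_image hα hβ] at hg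
  have huniv : ∫ v in (Set.univ : Set ℝ), Real.exp (-v^2) = Real.sqrt π := by
    rw [setIntegral_univ]
    have := integral_gaussian 1
    simp only [one_mul, neg_mul] at this ⊢
    rw [this, div_one]
  rw [huniv] at hg
  rw [hg]
  refine setIntegral_congr_fun measurableSet_Ioi fun u hu => ?_
  have hu' : (0:ℝ) < u := hu
  rw [smul_eq_mul, abs_of_pos (by positivity : (0:ℝ) < α + β * (u^2)⁻¹)]
  unfold gfun
  rw [div_eq_mul_inv β u, div_eq_mul_inv β (u^2)]

lemma gfun_symm (hα : 0 < α) (hβ : 0 < β) :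
    ∫ u in Set.Ioi (0:ℝ), (β / u^2) * gfun α β u
      = α * ∫ u in Set.Ioi (0:ℝ), gfun α β u := by
  rw [key_cv hα hβ, ← integral_const_mul]
  refine setIntegral_congr_fun measurableSet_Ioi fun u hu => ?_
  have hu' : (0:ℝ) < u := hu
  field_simp

lemma gfun_inv_integrableOn (hα : 0 < α) (hβ : 0 < β) :
    IntegrableOn (fun u => (β / u^2) * gfun α β u) (Set.Ioi (0:ℝ)) := by
  have hiff := integrableOn_image_iff_integrableOn_abs_deriv_smul measurableSet_Ioi
    (phi_deriv hα hβ) (phi_inj hα hβ) (gfun α β)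
  rw [phi_image hα hβ] at hiff
  have h1 : IntegrableOn (fun u : ℝ => |β / α * -(u^2)⁻¹| • gfun α β (β / α * u⁻¹))
      (Set.Ioi (0:ℝ)) := hiff.mp (gfun_integrableOn hα hβ)
  have h2 := (h1.const_mul α)
  refine MeasureTheory.IntegrableOn.congr_fun h2 (fun u hu => ?_) measurableSet_Ioi
  have hu' : (0:ℝ) < u := hu
  rw [phi_gfun hα hβ hu', smul_eq_mul, abs_mul, abs_neg,
    abs_of_pos (by positivity : (0:ℝ) < β / α),
    abs_of_pos (by positivity : (0:ℝ) < ((u:ℝ)^2)⁻¹)]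
  field_simp

end

section
variable {α β : ℝ}

lemma gfun_integral (hα : 0 < α) (hβ : 0 < β) :
    ∫ u in Set.Ioi (0:ℝ), gfun α β u = Real.sqrt π / (2 * α) := by
  have hsplit : ∫ u in Set.Ioi (0:ℝ), (α + β / u^2) * gfun α β u
      = (∫ u in Set.Ioi (0:ℝ), α * gfun α β u)
        + ∫ u in Set.Ioi (0:ℝ), (β / u^2) * gfun α β u := by
    rw [← integral_add ((gfun_integrableOn hα hβ).const_mul α)
      (gfun_inv_integrableOn hα hβ)]
    refine setIntegral_congr_fun measurableSet_Ioi fun u hu => ?_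
    ring
  have htot := gfun_total hα hβ
  rw [hsplit, integral_const_mul, gfun_symm hα hβ] at htot
  have : 2 * α * ∫ u in Set.Ioi (0:ℝ), gfun α β u = Real.sqrt π := by linarith
  field_simp at this ⊢
  linarith

end

theorem stmt0 (a p : ℝ) (ha : 0 < a) (hp : 0 < p) :
    ∫ t in Set.Ioi (0:ℝ), t ^ (-(1:ℝ)/2) * Real.exp (-p * t - a / (4 * t)) =
      Real.sqrt (π / p) * Real.exp (-Real.sqrt (a * p)) := by
  have hα : (0:ℝ) < Real.sqrt p := Real.sqrt_pos.2 hp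
  set α := Real.sqrt p with hαdef
  set β := Real.sqrt a / 2 with hβdef
  have hβ : 0 < β := by
    rw [hβdef]; positivity
  have hs : Real.sqrt (a*p) = 2*α*β := by
    rw [hβdef, hαdef, Real.sqrt_mul ha.le]
    ring
  have hA := integral_comp_rpow_Ioi_of_pos
    (g := fun t : ℝ => t ^ (-(1:ℝ)/2) * Real.exp (-p * t - a / (4 * t)))
    (p := 2) two_pos
  rw [← hA]
  have hcong : ∀ x ∈ Set.Ioi (0:ℝ),
      ((2:ℝ) * x ^ ((2:ℝ)-1)) • ((x ^ (2:ℝ)) ^ (-(1:ℝ)/2)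
          * Real.exp (-p * (x ^ (2:ℝ)) - a / (4 * (x ^ (2:ℝ)))))
        = (2 * Real.exp (-Real.sqrt (a*p))) * gfun α β x := by
    intro x hx
    have hx' : (0:ℝ) < x := hx
    have e1 : x ^ ((2:ℝ)-1) = x := by norm_num
    have e3 : (x ^ (2:ℝ)) ^ (-(1:ℝ)/2) = x⁻¹ := by
      rw [← Real.rpow_mul hx'.le]
      norm_num
      rw [Real.rpow_neg_one]
    have hp' : p = α^2 := (Real.sq_sqrt hp.le).symm
    have ha' : a = 4*β^2 := by
      rw [hβdef, div_pow, Real.sq_sqrt ha.le]; ring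
    have e4 : -p * (x ^ (2:ℝ)) - a / (4 * (x ^ (2:ℝ)))
        = -(α*x - β/x)^2 - Real.sqrt (a*p) := by
      rw [Real.rpow_two, hs]
      rw [hp', ha']
      field_simp
      ring
    rw [e1, e3, e4, smul_eq_mul]
    have e5 : Real.exp (-(α*x - β/x)^2 - Real.sqrt (a*p))
        = Real.exp (-Real.sqrt (a*p)) * Real.exp (-(α*x - β/x)^2) := by
      rw [← Real.exp_add]; ring_nf
    rw [hs] at e5 ⊢
    rw [e5]
    simp only [gfun]
    field_simp
  rw [setIntegral_congr_fun measurableSet_Ioi hcong, integral_const_mul,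
    gfun_integral hα hβ]
  have hrhs : Real.sqrt (π / p) = Real.sqrt π / α := by
    rw [hαdef, Real.sqrt_div Real.pi_nonneg]
  rw [hrhs]
  field_simp
end

section
/- For real ν, a > 0, and p > 0, the integral ∫₀^∞ t^{ν-1} exp(-p t - a/(4t)) dt equals 2 (a/(4p))^{ν/2} K_ν(√(a p)), where K_ν is the modified Bessel function of the second kind. -/
open MeasureTheory Real Set Filter

theorem stmt2 (ν a p : ℝ) (ha : 0 < a) (hp : 0 < p) :
    ∫ t in Set.Ioi (0:ℝ), t ^ (ν - 1) * Real.exp (-p * t - a / (4 * t)) =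
      2 * (a / (4 * p)) ^ (ν / 2) * besselK ν (Real.sqrt (a * p)) := by
  have hap : 0 < a * p := mul_pos ha hp
  set z := Real.sqrt (a * p) with hz
  set c := Real.sqrt (a / p) with hc
  have hcpos : 0 < c := Real.sqrt_pos.mpr (div_pos ha hp)
  have hpc : p * c = z := by
    have h1 : p ^ 2 * (a / p) = a * p := by field_simp
    rw [hz, ← h1, Real.sqrt_mul (sq_nonneg p), Real.sqrt_sq hp.le, hc]
  have hac : a / c = z := by
    have h2 : a ^ 2 / (a / p) = a * p := by field_simp
    rw [hz, ← h2, Real.sqrt_div (sq_nonneg a), Real.sqrt_sq ha.le, hc]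
  have hint : ∫ t in Set.Ioi (0:ℝ), t ^ (ν - 1) * Real.exp (-p * t - a / (4 * t))
      = c * ∫ s in Set.Ioi (0:ℝ),
          (c * s) ^ (ν - 1) * Real.exp (-p * (c * s) - a / (4 * (c * s))) := by
    rw [MeasureTheory.integral_comp_mul_left_Ioi
      (fun t => t ^ (ν - 1) * Real.exp (-p * t - a / (4 * t))) 0 hcpos]
    rw [mul_zero, smul_eq_mul, ← mul_assoc, mul_inv_cancel₀ hcpos.ne', one_mul]
  have hcongr : ∀ s ∈ Set.Ioi (0:ℝ),
      (c * s) ^ (ν - 1) * Real.exp (-p * (c * s) - a / (4 * (c * s)))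
      = c ^ (ν - 1) * (s ^ (ν - 1) * Real.exp (-z * s - z / (4 * s))) := by
    intro s hs
    have hs0 : 0 < s := hs
    have e1 : -p * (c * s) - a / (4 * (c * s)) = -z * s - z / (4 * s) := by
      have h1 : p * (c * s) = z * s := by rw [← hpc]; ring
      have h2 : a / (4 * (c * s)) = z / (4 * s) := by
        rw [← hac, div_div]
        congr 1
        ring
      rw [show -p * (c * s) - a / (4 * (c * s)) = -(p * (c * s)) - a / (4 * (c * s)) by ring,
        h1, h2]; ring
    rw [Real.mul_rpow hcpos.le hs0.le, e1, mul_assoc]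
  have hI : ∫ s in Set.Ioi (0:ℝ),
      (c * s) ^ (ν - 1) * Real.exp (-p * (c * s) - a / (4 * (c * s)))
      = c ^ (ν - 1) * ∫ s in Set.Ioi (0:ℝ),
          s ^ (ν - 1) * Real.exp (-z * s - z / (4 * s)) := by
    rw [← MeasureTheory.integral_const_mul]
    exact MeasureTheory.setIntegral_congr_fun measurableSet_Ioi hcongr
  have h24 : (2:ℝ) ^ ν = 4 ^ (ν / 2) := by
    rw [show (ν / 2) = (1/2) * ν by ring, Real.rpow_mul (by norm_num : (0:ℝ) ≤ 4),
      ← Real.sqrt_eq_rpow, show Real.sqrt 4 = 2 by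
        rw [show (4:ℝ) = 2 ^ 2 by norm_num, Real.sqrt_sq (by norm_num : (0:ℝ) ≤ 2)]]
  have h4 : (4:ℝ) * (a / (4 * p)) = a / p := by field_simp
  have hcnu : c ^ ν = 2 ^ ν * (a / (4 * p)) ^ (ν / 2) := by
    rw [hc, Real.sqrt_eq_rpow, ← Real.rpow_mul (div_pos ha hp).le,
      show (1/2) * ν = ν / 2 by ring, h24,
      ← Real.mul_rpow (by norm_num) (by positivity), h4]
  rw [hint, hI, besselK]
  rw [← mul_assoc]
  rw [show c * c ^ (ν - 1) = c ^ ν by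
    conv_rhs => rw [show ν = 1 + (ν - 1) by ring]
    rw [Real.rpow_add hcpos, Real.rpow_one]]
  rw [hcnu]
  rw [show (2:ℝ) ^ ν = 2 * 2 ^ (ν - 1) by
    conv_lhs => rw [show ν = 1 + (ν - 1) by ring]
    rw [Real.rpow_add (by norm_num : (0:ℝ) < 2), Real.rpow_one]]
  ring
end

section
/- Define 𝒦_ν(z) = 2^{ν-1} ∫₀^∞ t^{ν-1} exp(-z t - z/(4t)) dt for z > 0. Then 𝒦_ν satisfies the modified Bessel differential equation z² 𝒦_ν''(z) + z 𝒦_ν'(z) - (z² + ν²) 𝒦_ν(z) = 0. -/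
/-!
Differentiating under the integral sign, with `s = t + 1/(4t)`, gives
`𝒦_ν' = -2^{ν-1} ∫ s t^{ν-1} e^{-zs}` and `𝒦_ν'' = 2^{ν-1} ∫ s² t^{ν-1} e^{-zs}`, so the Bessel
combination is `2^{ν-1} ∫ (z²s² - zs - z² - ν²) t^{ν-1} e^{-zs} dt`. Since `s² - 1 = (t - 1/(4t))²`,
this integrand is the `t`-derivative of `-(ν + z(t - 1/(4t))) t^ν e^{-zs}`, which vanishes at `0⁺`
and at `∞`. All integrability and limits follow from `t^p ≤ (4s)^⌈|p|⌉` and the decay of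
`s^n e^{-cs}`, because `s → ∞` at both ends of `(0, ∞)`.
-/

open MeasureTheory Real Set Filter

open Topology

lemma pow_mul_exp_neg_mul_le (n : ℕ) {c x : ℝ} (hc : 0 < c) (hx : 0 ≤ x) :
    x ^ n * exp (-(c * x)) ≤ n.factorial / c ^ n := by
  have h := pow_div_factorial_le_exp (x := c * x) (mul_nonneg hc.le hx) n
  rw [div_le_iff₀ (by positivity), mul_pow] at h
  rw [le_div_iff₀ (by positivity)]
  calc x ^ n * exp (-(c * x)) * c ^ n = c ^ n * x ^ n * exp (-(c * x)) := by ring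
    _ ≤ exp (c * x) * n.factorial * exp (-(c * x)) := by gcongr
    _ = n.factorial := by rw [mul_right_comm, ← exp_add]; simp

theorem integral_Ioi_of_hasDerivAt_of_tendsto_nhdsGT {E : Type*} [NormedAddCommGroup E]
    [NormedSpace ℝ E] [CompleteSpace E] {f f' : ℝ → E} {a : ℝ} {m₀ m : E}
    (hderiv : ∀ x ∈ Ioi a, HasDerivAt f (f' x) x) (f'int : IntegrableOn f' (Ioi a))
    (hzero : Tendsto f (𝓝[>] a) (𝓝 m₀)) (htop : Tendsto f atTop (𝓝 m)) :
    ∫ x in Ioi a, f' x = m - m₀ := by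
  rw [← Ici_sdiff_left] at hzero
  have hderiv' : ∀ x ∈ Ioi a, HasDerivAt (Function.update f a m₀) (f' x) x := fun x hx =>
    (hderiv x hx).congr_of_eventuallyEq <| (eventually_ne_nhds (ne_of_gt hx)).mono
      fun y hy => Function.update_of_ne hy _ _
  have htop' : Tendsto (Function.update f a m₀) atTop (𝓝 m) :=
    htop.congr' <| (eventually_ne_atTop a).mono fun x hx => (Function.update_of_ne hx _ _).symm
  simpa using integral_Ioi_of_hasDerivAt_of_tendsto
    (continuousWithinAt_update_same.mpr hzero) hderiv' f'int htop'

noncomputable def besselArg (t : ℝ) : ℝ := t + 1 / (4 * t)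

@[fun_prop]
lemma measurable_besselArg : Measurable besselArg := by
  unfold besselArg; fun_prop

lemma le_besselArg {t : ℝ} (ht : 0 < t) : t ≤ besselArg t := by
  have : 0 < 1 / (4 * t) := by positivity
  unfold besselArg
  linarith

lemma inv_le_four_mul_besselArg {t : ℝ} (ht : 0 < t) : t⁻¹ ≤ 4 * besselArg t := by
  unfold besselArg
  rw [mul_add, show 4 * (1 / (4 * t)) = t⁻¹ by field_simp]
  linarith

lemma rpow_le_four_mul_besselArg_pow {t : ℝ} (ht : 0 < t) (p : ℝ) :
    t ^ p ≤ (4 * besselArg t) ^ ⌈|p|⌉₊ := by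
  have hp : |p| ≤ ⌈|p|⌉₊ := Nat.le_ceil _
  rcases le_total 1 t with h1 | h1
  · calc t ^ p ≤ t ^ (⌈|p|⌉₊ : ℝ) :=
          rpow_le_rpow_of_exponent_le h1 ((le_abs_self p).trans hp)
      _ ≤ (4 * besselArg t) ^ ⌈|p|⌉₊ := by
          rw [rpow_natCast]
          gcongr
          linarith [le_besselArg ht]
  · calc t ^ p ≤ t ^ (-(⌈|p|⌉₊ : ℝ)) :=
          rpow_le_rpow_of_exponent_ge ht h1 (by linarith [neg_abs_le p])
      _ ≤ (4 * besselArg t) ^ ⌈|p|⌉₊ := by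
          rw [rpow_neg ht.le, rpow_natCast, ← inv_pow]
          gcongr
          exact inv_le_four_mul_besselArg ht

lemma tendsto_besselArg_atTop : Tendsto besselArg atTop atTop :=
  tendsto_atTop_mono' _ (eventually_gt_atTop 0 |>.mono fun _ ht => le_besselArg ht) tendsto_id

lemma tendsto_besselArg_nhdsGT_zero : Tendsto besselArg (𝓝[>] 0) atTop := by
  refine tendsto_atTop_mono' _ ?_
    (tendsto_inv_nhdsGT_zero.atTop_div_const (by norm_num : (0 : ℝ) < 4))
  filter_upwards [self_mem_nhdsWithin] with t (ht : 0 < t)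
  linarith [inv_le_four_mul_besselArg ht]

lemma integrableOn_besselArg_pow_mul_rpow_mul_exp (k : ℕ) (p : ℝ) {c : ℝ} (hc : 0 < c) :
    IntegrableOn (fun t => besselArg t ^ k * t ^ p * exp (-c * besselArg t)) (Ioi 0) := by
  set n := ⌈|p|⌉₊
  set C : ℝ := 4 ^ n * ((k + n).factorial / (c / 2) ^ (k + n)) with hC
  refine Integrable.mono' ((exp_neg_integrableOn_Ioi 0 (half_pos hc)).const_mul C)
    (by fun_prop : Measurable _).aestronglyMeasurable ?_
  refine (ae_restrict_iff' measurableSet_Ioi).2 (ae_of_all _ fun t (ht : 0 < t) => ?_)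
  have hs : 0 ≤ besselArg t := ht.le.trans (le_besselArg ht)
  rw [norm_of_nonneg (by positivity)]
  -- split `exp (-c s)` into two halves: one absorbs the powers of `s`, the other gives decay in `t`
  calc besselArg t ^ k * t ^ p * exp (-c * besselArg t)
      ≤ besselArg t ^ k * (4 * besselArg t) ^ n * exp (-c * besselArg t) := by
        gcongr; exact rpow_le_four_mul_besselArg_pow ht p
    _ = 4 ^ n * (besselArg t ^ (k + n) * exp (-(c / 2 * besselArg t))) *
          exp (-(c / 2) * besselArg t) := by
        rw [show -c * besselArg t = -(c / 2 * besselArg t) + -(c / 2) * besselArg t by ring,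
          exp_add]
        ring
    _ ≤ C * exp (-(c / 2) * t) := by
        have hpow := pow_mul_exp_neg_mul_le (k + n) (half_pos hc) hs
        have hexp : exp (-(c / 2) * besselArg t) ≤ exp (-(c / 2) * t) :=
          exp_le_exp.2 (by nlinarith [le_besselArg ht])
        rw [hC]
        gcongr

lemma tendsto_rpow_mul_exp_neg_mul_besselArg {l : Filter ℝ} (hl : Tendsto besselArg l atTop)
    (hpos : ∀ᶠ t in l, 0 < t) (p : ℝ) {c : ℝ} (hc : 0 < c) :
    Tendsto (fun t => t ^ p * exp (-c * besselArg t)) l (𝓝 0) := by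
  set n := ⌈|p|⌉₊
  have hdecay : Tendsto (fun x : ℝ => 4 ^ n * (x ^ n * exp (-c * x))) atTop (𝓝 0) := by
    simpa [rpow_natCast] using (tendsto_rpow_mul_exp_neg_mul_atTop_nhds_zero n c hc).const_mul
      ((4 : ℝ) ^ n)
  refine tendsto_of_tendsto_of_tendsto_of_le_of_le' tendsto_const_nhds (hdecay.comp hl) ?_ ?_
  · filter_upwards [hpos] with t ht
    positivity
  · filter_upwards [hpos] with t ht
    calc t ^ p * exp (-c * besselArg t) ≤ (4 * besselArg t) ^ n * exp (-c * besselArg t) := by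
          gcongr; exact rpow_le_four_mul_besselArg_pow ht p
      _ = _ := by simp only [Function.comp, mul_pow]; ring

noncomputable def besselMoment (k : ℕ) (ν z : ℝ) : ℝ :=
  ∫ t in Ioi 0, besselArg t ^ k * t ^ (ν - 1) * exp (-z * besselArg t)

lemma besselK_eq_besselMoment_zero (ν : ℝ) :
    besselK ν = fun z => 2 ^ (ν - 1) * besselMoment 0 ν z := by
  ext z
  simp only [besselK, besselMoment, besselArg, pow_zero, one_mul]
  congr 2 with t
  ring_nf

lemma hasDerivAt_besselMoment (k : ℕ) (ν : ℝ) {z : ℝ} (hz : 0 < z) :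
    HasDerivAt (besselMoment k ν) (-besselMoment (k + 1) ν z) z := by
  have hint (m : ℕ) {x : ℝ} (hx : 0 < x) :=
    integrableOn_besselArg_pow_mul_rpow_mul_exp m (ν - 1) hx
  have key := hasDerivAt_integral_of_dominated_loc_of_deriv_le
    (μ := volume.restrict (Ioi 0)) (x₀ := z)
    (F' := fun x t => -(besselArg t ^ (k + 1) * t ^ (ν - 1) * exp (-x * besselArg t)))
    (Ioi_mem_nhds (half_lt_self hz))
    (eventually_gt_nhds hz |>.mono fun x hx => (hint k hx).aestronglyMeasurable)
    (hint k hz) (hint (k + 1) hz).aestronglyMeasurable.neg ?_ (hint (k + 1) (half_pos hz)) ?_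
  · rw [integral_neg] at key
    exact key.2
  · refine (ae_restrict_iff' measurableSet_Ioi).2 (ae_of_all _ fun t (ht : 0 < t) x hx => ?_)
    have hs : 0 ≤ besselArg t := ht.le.trans (le_besselArg ht)
    rw [norm_neg, norm_of_nonneg (by positivity)]
    gcongr
    exact le_of_lt hx
  · refine ae_of_all _ fun t x _ => ?_
    have h := ((hasDerivAt_neg x).mul_const (besselArg t)).exp.const_mul
      (besselArg t ^ k * t ^ (ν - 1))
    refine h.congr_deriv ?_
    ring

noncomputable def besselBoundary (ν z t : ℝ) : ℝ :=
  (z / 4 * t ^ (ν - 1) - ν * t ^ ν - z * t ^ (ν + 1)) * exp (-z * besselArg t)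

lemma hasDerivAt_besselArg {t : ℝ} (ht : t ≠ 0) :
    HasDerivAt besselArg (1 - 1 / (4 * t ^ 2)) t := by
  have h := (hasDerivAt_id' t).add
    ((hasDerivAt_const t (1 : ℝ)).div ((hasDerivAt_id' t).const_mul 4) (by positivity))
  refine h.congr_deriv ?_
  field_simp
  ring

lemma hasDerivAt_besselBoundary (ν z : ℝ) {t : ℝ} (ht : 0 < t) :
    HasDerivAt (besselBoundary ν z)
      ((z ^ 2 * besselArg t ^ 2 - z * besselArg t - (z ^ 2 + ν ^ 2)) * t ^ (ν - 1) *
        exp (-z * besselArg t)) t := by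
  have hrpow (q : ℝ) : HasDerivAt (fun t : ℝ => t ^ q) (q * t ^ (q - 1)) t :=
    hasDerivAt_rpow_const (Or.inl ht.ne')
  have h := ((((hrpow (ν - 1)).const_mul (z / 4)).sub ((hrpow ν).const_mul ν)).sub
    ((hrpow (ν + 1)).const_mul z)).mul ((hasDerivAt_besselArg ht.ne').const_mul (-z)).exp
  refine h.congr_deriv ?_
  simp only [Pi.sub_apply]
  have hpow (a : ℝ) : t ^ (ν - 1 + a) = t ^ (ν - 1) * t ^ a := rpow_add ht _ _
  rw [show ν - 1 - 1 = ν - 1 + -1 by ring, show ν = ν - 1 + 1 by ring,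
    show ν - 1 + 1 + 1 = ν - 1 + 2 by ring, show ν - 1 + 1 - 1 = ν - 1 by ring,
    show ν - 1 + 2 - 1 = ν - 1 + 1 by ring, hpow, hpow, hpow, rpow_neg_one, rpow_one, rpow_two]
  simp only [besselArg]
  field_simp
  ring

lemma tendsto_besselBoundary (ν : ℝ) {z : ℝ} (hz : 0 < z) {l : Filter ℝ}
    (hl : Tendsto besselArg l atTop) (hpos : ∀ᶠ t in l, 0 < t) :
    Tendsto (besselBoundary ν z) l (𝓝 0) := by
  have h (p : ℝ) := tendsto_rpow_mul_exp_neg_mul_besselArg hl hpos p hz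
  have hsum :=
    (((h (ν - 1)).const_mul (z / 4)).sub ((h ν).const_mul ν)).sub ((h (ν + 1)).const_mul z)
  rw [mul_zero, mul_zero, mul_zero, sub_zero, sub_zero] at hsum
  exact hsum.congr fun t => by unfold besselBoundary; ring

lemma besselMoment_ode (ν : ℝ) {z : ℝ} (hz : 0 < z) :
    z ^ 2 * besselMoment 2 ν z - z * besselMoment 1 ν z - (z ^ 2 + ν ^ 2) * besselMoment 0 ν z
      = 0 := by
  set g : ℕ → ℝ → ℝ := fun k t => besselArg t ^ k * t ^ (ν - 1) * exp (-z * besselArg t)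
  have hint (k : ℕ) : Integrable (g k) (volume.restrict (Ioi 0)) :=
    integrableOn_besselArg_pow_mul_rpow_mul_exp k (ν - 1) hz
  have hint₂₁ : Integrable (fun t => z ^ 2 * g 2 t - z * g 1 t) (volume.restrict (Ioi 0)) :=
    ((hint 2).const_mul _).sub ((hint 1).const_mul _)
  have hint₂₁₀ : Integrable (fun t => z ^ 2 * g 2 t - z * g 1 t - (z ^ 2 + ν ^ 2) * g 0 t)
      (volume.restrict (Ioi 0)) :=
    hint₂₁.sub ((hint 0).const_mul _)
  have hftc := integral_Ioi_of_hasDerivAt_of_tendsto_nhdsGT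
    (fun t ht => (hasDerivAt_besselBoundary ν z ht).congr_deriv (by simp only [g]; ring))
    hint₂₁₀
    (tendsto_besselBoundary ν hz tendsto_besselArg_nhdsGT_zero self_mem_nhdsWithin)
    (tendsto_besselBoundary ν hz tendsto_besselArg_atTop (eventually_gt_atTop 0))
  rwa [integral_sub hint₂₁ ((hint 0).const_mul _), integral_sub ((hint 2).const_mul _)
    ((hint 1).const_mul _), integral_const_mul, integral_const_mul, integral_const_mul,
    sub_zero] at hftc

lemma hasDerivAt_besselK (ν : ℝ) {z : ℝ} (hz : 0 < z) :
    HasDerivAt (besselK ν) (-(2 ^ (ν - 1) * besselMoment 1 ν z)) z := by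
  rw [besselK_eq_besselMoment_zero]
  simpa using (hasDerivAt_besselMoment 0 ν hz).const_mul (2 ^ (ν - 1))

lemma hasDerivAt_deriv_besselK (ν : ℝ) {z : ℝ} (hz : 0 < z) :
    HasDerivAt (deriv (besselK ν)) (2 ^ (ν - 1) * besselMoment 2 ν z) z := by
  have h := ((hasDerivAt_besselMoment 1 ν hz).const_mul (2 ^ (ν - 1))).neg
  refine (h.congr_deriv (by ring)).congr_of_eventuallyEq ?_
  filter_upwards [eventually_gt_nhds hz] with x hx using (hasDerivAt_besselK ν hx).deriv

theorem stmt5 (ν z : ℝ) (hz : 0 < z) :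
    z ^ 2 * deriv (deriv (besselK ν)) z + z * deriv (besselK ν) z
      - (z ^ 2 + ν ^ 2) * besselK ν z = 0 := by
  rw [(hasDerivAt_deriv_besselK ν hz).deriv, (hasDerivAt_besselK ν hz).deriv,
    besselK_eq_besselMoment_zero]
  linear_combination 2 ^ (ν - 1) * besselMoment_ode ν hz
end

section
/- Define 𝒦_ν(z) = 2^{ν-1} ∫₀^∞ t^{ν-1} exp(-z t - z/(4t)) dt. Then 𝒦_ν(z) ~ √(π/(2z)) e^{-z} as z → ∞, i.e., lim_{z→∞} 𝒦_ν(z) / (√(π/(2z)) e^{-z}) = 1. -/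
open MeasureTheory Real Set Filter

/-!
Laplace's method. The substitution `t = eᵘ / 2` turns the integral into
`𝒦_ν(z) = ½ ∫ exp (ν u - z cosh u) du`, whose phase `-cosh` peaks at `u = 0`. Rescaling
`u = s / √z` and factoring out `e^{-z}` leaves `exp (ν s / √z - z (cosh (s / √z) - 1))`, which tends
to `exp (-s² / 2)` pointwise and, by `1 + x² / 2 ≤ cosh x`, is dominated by `exp (ν² - s² / 4)`
for `z ≥ 1`. Dominated convergence and the Gaussian integral `√(2π)` finish the proof.
-/

open Topology

namespace Real

theorem one_add_sq_div_two_le_cosh (x : ℝ) : 1 + x ^ 2 / 2 ≤ cosh x := by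
  simpa [Finset.sum_range_succ] using
    sum_le_hasSum (Finset.range 2) (fun n _ => by rw [pow_mul]; positivity) (hasSum_cosh x)

theorem cosh_sub_one_le_of_sq_le_two {x : ℝ} (hx : x ^ 2 ≤ 2) :
    cosh x - 1 ≤ x ^ 2 / 2 + x ^ 4 / 4 := by
  have hsmall : |x ^ 2 / 2| ≤ 1 := by rw [abs_of_nonneg (by positivity)]; linarith
  have := (abs_le.mp (abs_exp_sub_one_sub_id_le hsmall)).2
  linarith [cosh_le_exp_half_sq x]

end Real

theorem integral_Ioi_zero_eq_integral_comp_mul_exp (g : ℝ → ℝ) {c : ℝ} (hc : 0 < c) :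
    ∫ t in Ioi 0, g t = ∫ u, c * exp u * g (c * exp u) := by
  have himage : (fun u => c * exp u) '' univ = Ioi 0 := by
    ext t
    simp only [image_univ, mem_range, mem_Ioi]
    refine ⟨fun ⟨u, hu⟩ => hu ▸ by positivity, fun ht => ⟨log (t / c), ?_⟩⟩
    rw [exp_log (by positivity)]
    field_simp
  have hinj : InjOn (fun u => c * exp u) univ := fun a _ b _ h =>
    exp_injective (mul_left_cancel₀ hc.ne' h)
  rw [← himage, integral_image_eq_integral_abs_deriv_smul MeasurableSet.univ
    (fun u _ => ((hasDerivAt_exp u).const_mul c).hasDerivWithinAt) hinj, setIntegral_univ]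
  simp_rw [smul_eq_mul, abs_of_pos (by positivity : 0 < c * exp _)]

theorem besselK_eq_half_integral_exp_sub_mul_cosh (ν z : ℝ) :
    besselK ν z = 1 / 2 * ∫ u, exp (ν * u - z * cosh u) := by
  rw [besselK, integral_Ioi_zero_eq_integral_comp_mul_exp _ (by norm_num : (0 : ℝ) < 1 / 2),
    ← integral_const_mul, ← integral_const_mul]
  congr 1 with u
  have hpow : 2 ^ (ν - 1) * (1 / 2 * exp u) ^ (ν - 1) = exp ((ν - 1) * u) := by
    rw [← mul_rpow (by norm_num) (by positivity), ← mul_assoc, rpow_def_of_pos (by positivity)]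
    norm_num [mul_comm]
  have hexp : -z * (1 / 2 * exp u) - z / (4 * (1 / 2 * exp u)) = -z * cosh u := by
    rw [cosh_eq, exp_neg]
    field_simp
    ring
  calc 2 ^ (ν - 1) * (1 / 2 * exp u * ((1 / 2 * exp u) ^ (ν - 1) *
          exp (-z * (1 / 2 * exp u) - z / (4 * (1 / 2 * exp u)))))
      = 1 / 2 * (exp u * exp ((ν - 1) * u) * exp (-z * cosh u)) := by
        rw [← hpow, hexp]; ring
    _ = 1 / 2 * exp (ν * u - z * cosh u) := by
        rw [← exp_add, ← exp_add]; ring_nf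

noncomputable def besselKRescaledIntegrand (ν z s : ℝ) : ℝ :=
  exp (ν * (s / √z) - z * (cosh (s / √z) - 1))

theorem sq_div_two_le_mul_cosh_div_sqrt_sub_one (s : ℝ) {z : ℝ} (hz : 0 < z) :
    s ^ 2 / 2 ≤ z * (cosh (s / √z) - 1) := by
  have h := one_add_sq_div_two_le_cosh (s / √z)
  rw [div_pow, sq_sqrt hz.le] at h
  calc s ^ 2 / 2 = z * (s ^ 2 / z / 2) := by field_simp
    _ ≤ z * (cosh (s / √z) - 1) := by gcongr; linarith

theorem mul_cosh_div_sqrt_sub_one_le (s : ℝ) {z : ℝ} (hz : 0 < z) (hs : s ^ 2 ≤ 2 * z) :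
    z * (cosh (s / √z) - 1) ≤ s ^ 2 / 2 + s ^ 4 / (4 * z) := by
  have hx : (s / √z) ^ 2 = s ^ 2 / z := by rw [div_pow, sq_sqrt hz.le]
  have h := cosh_sub_one_le_of_sq_le_two (x := s / √z)
    (by rw [hx, div_le_iff₀ hz]; linarith)
  rw [show (s / √z) ^ 4 = ((s / √z) ^ 2) ^ 2 by ring, hx] at h
  calc z * (cosh (s / √z) - 1) ≤ z * (s ^ 2 / z / 2 + (s ^ 2 / z) ^ 2 / 4) := by gcongr
    _ = s ^ 2 / 2 + s ^ 4 / (4 * z) := by field_simp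

theorem tendsto_mul_cosh_div_sqrt_sub_one (s : ℝ) :
    Tendsto (fun z => z * (cosh (s / √z) - 1)) atTop (𝓝 (s ^ 2 / 2)) := by
  have hupper : Tendsto (fun z => s ^ 2 / 2 + s ^ 4 / (4 * z)) atTop (𝓝 (s ^ 2 / 2)) := by
    simpa using tendsto_const_nhds.add
      (tendsto_const_nhds.div_atTop (tendsto_id.const_mul_atTop (by norm_num : (0 : ℝ) < 4)))
  refine tendsto_of_tendsto_of_tendsto_of_le_of_le' tendsto_const_nhds hupper ?_ ?_
  · filter_upwards [eventually_gt_atTop 0] with z hz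
    exact sq_div_two_le_mul_cosh_div_sqrt_sub_one s hz
  · filter_upwards [eventually_gt_atTop 0, eventually_ge_atTop (s ^ 2 / 2)] with z hz hzs
    exact mul_cosh_div_sqrt_sub_one_le s hz (by linarith)

theorem tendsto_besselKRescaledIntegrand (ν s : ℝ) :
    Tendsto (fun z => besselKRescaledIntegrand ν z s) atTop (𝓝 (exp (-(1 / 2) * s ^ 2))) := by
  have hsqrt : Tendsto (fun z => s / √z) atTop (𝓝 0) :=
    tendsto_const_nhds.div_atTop tendsto_sqrt_atTop
  have := ((hsqrt.const_mul ν).sub (tendsto_mul_cosh_div_sqrt_sub_one s)).rexp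
  simpa [besselKRescaledIntegrand, neg_div, div_eq_inv_mul] using this

theorem norm_besselKRescaledIntegrand_le (ν s : ℝ) {z : ℝ} (hz : 1 ≤ z) :
    ‖besselKRescaledIntegrand ν z s‖ ≤ exp (ν ^ 2) * exp (-(1 / 4) * s ^ 2) := by
  rw [besselKRescaledIntegrand, norm_of_nonneg (exp_pos _).le, ← exp_add]
  gcongr
  have hsqrt : 1 ≤ √z := one_le_sqrt.mpr hz
  have hlinear : ν * (s / √z) ≤ |ν| * |s| :=
    calc ν * (s / √z) ≤ |ν * (s / √z)| := le_abs_self _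
      _ = |ν| * (|s| / √z) := by rw [abs_mul, abs_div, abs_of_pos (by positivity : 0 < √z)]
      _ ≤ |ν| * |s| := by gcongr; exact div_le_self (abs_nonneg s) hsqrt
  -- `|ν| |s| ≤ ν² + s² / 4` absorbs the linear term into half of the quadratic one.
  nlinarith [sq_div_two_le_mul_cosh_div_sqrt_sub_one s (z := z) (by linarith),
    sq_nonneg (|s| / 2 - |ν|), sq_abs s, sq_abs ν]

theorem tendsto_integral_besselKRescaledIntegrand (ν : ℝ) :
    Tendsto (fun z => ∫ s, besselKRescaledIntegrand ν z s) atTop (𝓝 √(2 * π)) := by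
  have hgauss : ∫ s : ℝ, exp (-(1 / 2) * s ^ 2) = √(2 * π) := by
    rw [integral_gaussian]; congr 1; ring
  rw [← hgauss]
  refine tendsto_integral_filter_of_dominated_convergence _ ?_ ?_
    ((integrable_exp_neg_mul_sq (by norm_num : (0 : ℝ) < 1 / 4)).const_mul (exp (ν ^ 2)))
    (.of_forall (tendsto_besselKRescaledIntegrand ν))
  · exact .of_forall fun z =>
      (by unfold besselKRescaledIntegrand; fun_prop : Continuous _).aestronglyMeasurable
  · filter_upwards [eventually_ge_atTop 1] with z hz
    exact .of_forall fun s => norm_besselKRescaledIntegrand_le ν s hz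

theorem integral_exp_sub_mul_cosh_eq {z : ℝ} (hz : 0 < z) (ν : ℝ) :
    ∫ u, exp (ν * u - z * cosh u) = exp (-z) / √z * ∫ s, besselKRescaledIntegrand ν z s := by
  have hsqrt : 0 < √z := sqrt_pos.mpr hz
  have hscale := Measure.integral_comp_div (fun u => exp (ν * u - z * cosh u)) √z
  rw [abs_of_pos hsqrt, smul_eq_mul] at hscale
  have hfactor : ∀ s, exp (ν * (s / √z) - z * cosh (s / √z)) =
      exp (-z) * besselKRescaledIntegrand ν z s := fun s => by
    rw [besselKRescaledIntegrand, ← exp_add]; ring_nf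
  simp_rw [hfactor, integral_const_mul] at hscale
  field_simp
  linarith

theorem besselK_div_eq {z : ℝ} (hz : 0 < z) (ν : ℝ) :
    besselK ν z / (√(π / (2 * z)) * exp (-z)) =
      (√(2 * π))⁻¹ * ∫ s, besselKRescaledIntegrand ν z s := by
  rw [besselK_eq_half_integral_exp_sub_mul_cosh, integral_exp_sub_mul_cosh_eq hz,
    sqrt_div pi_pos.le, sqrt_mul zero_le_two, sqrt_mul zero_le_two]
  have hsqrt_two : √2 ^ 2 = 2 := sq_sqrt zero_le_two
  have : 0 < √z := sqrt_pos.mpr hz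
  have : 0 < √π := sqrt_pos.mpr pi_pos
  field_simp
  linear_combination (∫ s, besselKRescaledIntegrand ν z s) * hsqrt_two

theorem stmt7 (ν : ℝ) :
    Filter.Tendsto (fun z => besselK ν z / (Real.sqrt (π / (2 * z)) * Real.exp (-z)))
      Filter.atTop (nhds 1) := by
  have hlim := (tendsto_integral_besselKRescaledIntegrand ν).const_mul (√(2 * π))⁻¹
  rw [inv_mul_cancel₀ (by positivity)] at hlim
  exact hlim.congr' <| (eventually_gt_atTop 0).mono fun z hz => (besselK_div_eq hz ν).symm
end

section
/- Let T ~ Exp(λ) with λ > 0, let S₀ > 0, μ̃ ∈ ℝ, σ > 0, and define f(x) = ∫₀^∞ λ e^{-λ t} f_LN(x; ln S₀ + μ̃ t, σ² t) dt. Then f(x) = (λ/(S₀ √(μ̃² + 2σ²λ))) (x/S₀)^{-α-1} for x ≥ S₀ and f(x) = (λ/(S₀ √(μ̃² + 2σ²λ))) (x/S₀)^{β-1} for 0 < x < S₀, where α = (-μ̃ + √(μ̃² + 2σ²λ))/σ² and β = (μ̃ + √(μ̃² + 2σ²λ))/σ². -/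
/-!
Writing `y = log (x / S₀)`, the mixture integrand is `C · t^{-1/2} exp (-p t - q / t)` with
`p = λ + μ̃² / (2σ²)` and `q = y² / (2σ²)`. Substituting `t = u²` and completing the square,
`p u² + q / u² = (√p u - √q / u)² + 2 √(p q)`, reduces the Laplace integral to the
Cauchy–Schlömilch identity `∫₀^∞ F (a u - b / u) du = (2a)⁻¹ ∫_ℝ F` for even integrable `F`,
applied to the Gaussian. The result is `λ / (x √D) · exp ((μ̃ y - √D |y|) / σ²)` with
`D = μ̃² + 2σ²λ`; the sign of `y` selects the Pareto exponent.
-/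

open MeasureTheory Real Set Filter

section Substitution

variable {E : Type*} [NormedAddCommGroup E] [NormedSpace ℝ E]

theorem integral_comp_div_Ioi (g : ℝ → E) {c : ℝ} (hc : 0 < c) :
    ∫ v in Ioi (0:ℝ), (c / v ^ 2) • g (c / v) = ∫ u in Ioi (0:ℝ), g u := by
  have hderiv : ∀ v ∈ Ioi (0:ℝ), HasDerivWithinAt (c / ·) (-(c / v ^ 2)) (Ioi 0) v := fun v hv => by
    simpa [div_eq_mul_inv] using
      ((hasDerivAt_inv (ne_of_gt hv)).const_mul c).hasDerivWithinAt (s := Ioi 0)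
  have hinj : InjOn (c / ·) (Ioi (0:ℝ)) := fun _ _ _ _ h =>
    inv_injective (mul_left_cancel₀ hc.ne' h)
  have himage : (c / ·) '' Ioi (0:ℝ) = Ioi 0 := by
    refine (image_subset_iff.2 fun v hv => div_pos hc hv).antisymm fun u hu =>
      ⟨c / u, div_pos hc hu, ?_⟩
    field_simp [(mem_Ioi.1 hu).ne']
  have := integral_image_eq_integral_abs_deriv_smul measurableSet_Ioi hderiv hinj g
  rw [himage] at this
  rw [this]
  refine setIntegral_congr_fun measurableSet_Ioi fun v hv => ?_
  rw [abs_neg, abs_of_pos (div_pos hc (pow_pos hv 2))]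

theorem hasDerivAt_mul_sub_div (a b : ℝ) {u : ℝ} (hu : u ≠ 0) :
    HasDerivAt (fun u => a * u - b / u) (a + b / u ^ 2) u := by
  have h := ((hasDerivAt_id' u).const_mul a).fun_sub ((hasDerivAt_inv hu).const_mul b)
  rw [show a * 1 - b * -(u ^ 2)⁻¹ = a + b / u ^ 2 by ring] at h
  simpa only [div_eq_mul_inv] using h

theorem strictMonoOn_mul_sub_div {a b : ℝ} (ha : 0 < a) (hb : 0 ≤ b) :
    StrictMonoOn (fun u => a * u - b / u) (Ioi 0) := fun u hu v _ huv => by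
  have h₁ : a * u < a * v := mul_lt_mul_of_pos_left huv ha
  have h₂ : b / v ≤ b / u := div_le_div_of_nonneg_left hb hu huv.le
  dsimp only
  linarith

theorem image_mul_sub_div_Ioi {a b : ℝ} (ha : 0 < a) (hb : 0 < b) :
    (fun u => a * u - b / u) '' Ioi 0 = univ := by
  refine eq_univ_of_forall fun w => ?_
  -- the preimage of `w` is the positive root of `a u² - w u - b`
  set s := √(w ^ 2 + 4 * a * b)
  have hs : s ^ 2 = w ^ 2 + 4 * a * b := sq_sqrt (by positivity)
  have hws : |w| < s := by
    rw [← sqrt_sq_eq_abs]; exact sqrt_lt_sqrt (sq_nonneg w) (by linarith [mul_pos ha hb])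
  have hpos : 0 < w + s := by linarith [neg_abs_le w]
  refine ⟨(w + s) / (2 * a), div_pos hpos (by positivity), ?_⟩
  field_simp
  linear_combination hs

theorem abs_smul_comp_mul_sub_div_eqOn (F : ℝ → E) {a b : ℝ} (ha : 0 < a) (hb : 0 ≤ b) :
    EqOn (fun u => |a + b / u ^ 2| • F (a * u - b / u))
      (fun u => (a + b / u ^ 2) • F (a * u - b / u)) (Ioi 0) :=
  fun u _ => by dsimp only; rw [abs_of_pos (by positivity)]

theorem integrableOn_smul_comp_mul_sub_div_Ioi_iff (F : ℝ → E) {a b : ℝ} (ha : 0 < a)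
    (hb : 0 < b) :
    IntegrableOn (fun u => (a + b / u ^ 2) • F (a * u - b / u)) (Ioi 0) ↔ Integrable F := by
  rw [← integrableOn_congr_fun (abs_smul_comp_mul_sub_div_eqOn F ha hb.le) measurableSet_Ioi,
    ← integrableOn_image_iff_integrableOn_abs_deriv_smul measurableSet_Ioi
      (fun u hu => (hasDerivAt_mul_sub_div a b (ne_of_gt hu)).hasDerivWithinAt)
      (strictMonoOn_mul_sub_div ha hb.le).injOn,
    image_mul_sub_div_Ioi ha hb, integrableOn_univ]

theorem integral_smul_comp_mul_sub_div_Ioi (F : ℝ → E) {a b : ℝ} (ha : 0 < a) (hb : 0 < b) :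
    ∫ u in Ioi (0:ℝ), (a + b / u ^ 2) • F (a * u - b / u) = ∫ w, F w := by
  rw [← setIntegral_congr_fun measurableSet_Ioi (abs_smul_comp_mul_sub_div_eqOn F ha hb.le),
    ← integral_image_eq_integral_abs_deriv_smul measurableSet_Ioi
      (fun u hu => (hasDerivAt_mul_sub_div a b (ne_of_gt hu)).hasDerivWithinAt)
      (strictMonoOn_mul_sub_div ha hb.le).injOn,
    image_mul_sub_div_Ioi ha hb, setIntegral_univ]

theorem integral_comp_mul_sub_div_Ioi_of_even [CompleteSpace E] {F : ℝ → E} (hF : Integrable F)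
    (hF_even : ∀ w, F (-w) = F w) {a b : ℝ} (ha : 0 < a) (hb : 0 < b) :
    ∫ u in Ioi (0:ℝ), F (a * u - b / u) = (2 * a)⁻¹ • ∫ w, F w := by
  set φ : ℝ → ℝ := fun u => a * u - b / u with hφ
  have hint : IntegrableOn (fun u => (a + b / u ^ 2) • F (φ u)) (Ioi 0) :=
    (integrableOn_smul_comp_mul_sub_div_Ioi_iff F ha hb).2 hF
  have hintF : IntegrableOn (fun u => a • F (φ u)) (Ioi 0) := by
    have hbound : ∀ᵐ u ∂volume.restrict (Ioi 0), ‖a / (a + b / u ^ 2)‖ ≤ 1 :=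
      ae_restrict_of_forall_mem measurableSet_Ioi fun u _ => by
        rw [norm_of_nonneg (by positivity), div_le_one (by positivity)]
        exact le_add_of_nonneg_right (by positivity)
    refine IntegrableOn.congr_fun
      (hint.bdd_smul 1 (by fun_prop : Measurable _).aestronglyMeasurable hbound)
      (fun u _ => ?_) measurableSet_Ioi
    rw [Pi.smul_apply', smul_smul, div_mul_cancel₀ _ (by positivity)]
  -- `u ↦ (b / a) / u` reverses the sign of `φ`
  have hinv : ∫ u in Ioi 0, (b / u ^ 2) • F (φ u) = ∫ u in Ioi 0, a • F (φ u) := by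
    rw [← integral_comp_div_Ioi _ (div_pos hb ha)]
    refine setIntegral_congr_fun measurableSet_Ioi fun u hu => ?_
    have hu : u ≠ 0 := ne_of_gt hu
    have hφ_inv : φ (b / a / u) = -φ u := by simp only [hφ]; field_simp; ring
    rw [smul_smul, hφ_inv, hF_even]
    congr 1
    field_simp
  have hint' : IntegrableOn (fun u => (b / u ^ 2) • F (φ u)) (Ioi 0) :=
    (hint.sub hintF).congr_fun
      (fun u _ => by simp only [Pi.sub_apply, add_smul, add_sub_cancel_left]) measurableSet_Ioi
  rw [← integral_smul_comp_mul_sub_div_Ioi F ha hb,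
    setIntegral_congr_fun measurableSet_Ioi fun u _ => add_smul a (b / u ^ 2) (F (φ u)),
    integral_add hintF hint', hinv, integral_smul, ← two_smul ℝ, smul_smul, smul_smul,
    show (2 * a)⁻¹ * 2 * a = 1 by field_simp, one_smul]

end Substitution

theorem integral_exp_neg_sq_mul_sub_div_Ioi {a b : ℝ} (ha : 0 < a) (hb : 0 ≤ b) :
    ∫ u in Ioi (0:ℝ), exp (-(a * u - b / u) ^ 2) = √π / (2 * a) := by
  rcases hb.eq_or_lt with rfl | hb
  · simp_rw [zero_div, sub_zero, mul_pow, ← neg_mul]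
    rw [integral_gaussian_Ioi, sqrt_div pi_pos.le, sqrt_sq ha.le]
    ring
  · have hgauss : ∫ w, exp (-w ^ 2) = √π := by simpa using integral_gaussian 1
    have hint : Integrable fun w : ℝ => exp (-w ^ 2) := by
      simpa using integrable_exp_neg_mul_sq one_pos
    rw [integral_comp_mul_sub_div_Ioi_of_even (F := fun w => exp (-w ^ 2)) hint
      (fun w => by rw [neg_sq]) ha hb, hgauss, smul_eq_mul, div_eq_inv_mul]

theorem integral_inv_sqrt_mul_exp_neg_mul_sub_div_Ioi {p q : ℝ} (hp : 0 < p) (hq : 0 ≤ q) :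
    ∫ t in Ioi (0:ℝ), (√t)⁻¹ * exp (-p * t - q / t) = √(π / p) * exp (-2 * √(p * q)) := by
  rw [← integral_comp_rpow_Ioi_of_pos two_pos]
  have hsq : ∀ u ∈ Ioi (0:ℝ),
      (2 * u ^ ((2:ℝ) - 1)) • ((√(u ^ (2:ℝ)))⁻¹ * exp (-p * u ^ (2:ℝ) - q / u ^ (2:ℝ))) =
        2 * exp (-2 * √(p * q)) * exp (-(√p * u - √q / u) ^ 2) := fun u hu => by
    have hu : 0 < u := hu
    have hexp : -p * u ^ 2 - q / u ^ 2 = -2 * √(p * q) + -(√p * u - √q / u) ^ 2 := by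
      rw [sqrt_mul hp.le]
      field_simp
      linear_combination (u ^ 2 * u ^ 2) * sq_sqrt hp.le + sq_sqrt hq
    rw [smul_eq_mul, rpow_two, sqrt_sq hu.le, hexp, exp_add, show (2:ℝ) - 1 = 1 by norm_num,
      rpow_one]
    field_simp
  rw [setIntegral_congr_fun measurableSet_Ioi hsq, integral_const_mul,
    integral_exp_neg_sq_mul_sub_div_Ioi (sqrt_pos.2 hp) (sqrt_nonneg q), sqrt_div' _ hp.le]
  field_simp

theorem mul_exp_mul_lognormalPdf_eq (lam m μ x : ℝ) {v t : ℝ} (hv : 0 < v) (ht : 0 < t) :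
    lam * exp (-lam * t) * lognormalPdf (m + μ * t) (v * t) x =
      lam * exp (μ * (log x - m) / v) / (x * √(2 * π * v)) *
        ((√t)⁻¹ * exp (-(lam + μ ^ 2 / (2 * v)) * t - (log x - m) ^ 2 / (2 * v) / t)) := by
  have hexp : exp (-lam * t) * exp (-(log x - (m + μ * t)) ^ 2 / (2 * (v * t))) =
      exp (μ * (log x - m) / v) *
        exp (-(lam + μ ^ 2 / (2 * v)) * t - (log x - m) ^ 2 / (2 * v) / t) := by
    rw [← exp_add, ← exp_add]
    congr 1
    field_simp
    ring
  rw [lognormalPdf, show 2 * π * (v * t) = 2 * π * v * t by ring, sqrt_mul (by positivity)]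
  linear_combination (lam / (√(2 * π * v) * √t * x)) * hexp

theorem integral_mul_exp_mul_lognormalPdf {lam : ℝ} (m μ x : ℝ) {v : ℝ} (hlam : 0 < lam)
    (hv : 0 < v) :
    ∫ t in Ioi (0:ℝ), lam * exp (-lam * t) * lognormalPdf (m + μ * t) (v * t) x =
      lam / (x * √(μ ^ 2 + 2 * v * lam)) *
        exp ((μ * (log x - m) - √(μ ^ 2 + 2 * v * lam) * |log x - m|) / v) := by
  rw [setIntegral_congr_fun measurableSet_Ioi fun t ht =>
      mul_exp_mul_lognormalPdf_eq lam m μ x hv ht, integral_const_mul]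
  set y := log x - m
  set D := μ ^ 2 + 2 * v * lam
  have hD : 0 < D := by positivity
  have hp : 0 < lam + μ ^ 2 / (2 * v) := by positivity
  have hsqrt_div : √(π / (lam + μ ^ 2 / (2 * v))) = √(2 * π * v) / √D := by
    rw [← sqrt_div' _ hD.le]; congr 1; field_simp; ring
  have hsqrt_mul : √((lam + μ ^ 2 / (2 * v)) * (y ^ 2 / (2 * v))) = √D * |y| / (2 * v) := by
    rw [← sqrt_sq (by positivity : 0 ≤ √D * |y| / (2 * v))]
    congr 1
    rw [div_pow, mul_pow, sq_sqrt hD.le, sq_abs]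
    field_simp
    ring
  rw [integral_inv_sqrt_mul_exp_neg_mul_sub_div_Ioi hp (by positivity), hsqrt_div, hsqrt_mul,
    show (μ * y - √D * |y|) / v = μ * y / v + -2 * (√D * |y| / (2 * v)) by ring, exp_add]
  field_simp

theorem stmt9 (lam S₀ μt σ : ℝ) (hlam : 0 < lam) (hS : 0 < S₀) (hσ : 0 < σ)
    (x : ℝ) (hx : 0 < x) :
    (∫ t in Set.Ioi (0:ℝ), lam * Real.exp (-lam * t) *
        lognormalPdf (Real.log S₀ + μt * t) (σ ^ 2 * t) x) =
      if S₀ ≤ x then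
        lam / (S₀ * Real.sqrt (μt ^ 2 + 2 * σ ^ 2 * lam)) *
          (x / S₀) ^ (-((-μt + Real.sqrt (μt ^ 2 + 2 * σ ^ 2 * lam)) / σ ^ 2) - 1)
      else
        lam / (S₀ * Real.sqrt (μt ^ 2 + 2 * σ ^ 2 * lam)) *
          (x / S₀) ^ ((μt + Real.sqrt (μt ^ 2 + 2 * σ ^ 2 * lam)) / σ ^ 2 - 1) := by
  rw [integral_mul_exp_mul_lognormalPdf _ _ _ hlam (by positivity : 0 < σ ^ 2)]
  set D := μt ^ 2 + 2 * σ ^ 2 * lam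
  set y := log x - log S₀ with hy
  have hexp_y : exp y = x / S₀ := by rw [hy, ← log_div hx.ne' hS.ne', exp_log (div_pos hx hS)]
  have key : ∀ e, (μt * y - √D * |y|) / σ ^ 2 = y * (e + 1) →
      lam / (x * √D) * exp ((μt * y - √D * |y|) / σ ^ 2) = lam / (S₀ * √D) * (x / S₀) ^ e := by
    intro e he
    rw [he, mul_add_one, exp_add, exp_mul, hexp_y]
    field_simp
  split_ifs with h
  · refine key _ ?_
    rw [abs_of_nonneg (sub_nonneg.2 (log_le_log hS h))]
    field_simp
    ring
  · refine key _ ?_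
    rw [abs_of_neg (sub_neg.2 (log_lt_log hx (not_le.1 h)))]
    field_simp
    ring
end

section
/- Let T follow the double Pareto distribution with density as in Eq. (DP) (parameters λ, μ̃, σ, S₀). For a natural number m with m μ̃ + m² σ²/2 < λ, the m-th moment equals ∫₀^∞ x^m f(x) dx = λ S₀^m/(λ - m μ̃ - m² σ²/2); equivalently, the moment is finite if and only if m < α = (-μ̃ + √(μ̃²+2σ²λ))/σ². -/
/-!
On each side of `S₀` the integrand `x ^ m f(x)` is a pure power of `x`: `x ^ (m + β - 1)` on
`(0, S₀]`, always integrable since `β > 0`, and `x ^ (m - α - 1)` on `(S₀, ∞)`, integrable exactly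
when `m < α`. Summing the two elementary integrals gives `C S₀ ^ (m + 1) (1 / (m + β) + 1 / (α - m))`,
and since `α` and `-β` are the roots of `p ↦ σ² p² / 2 + μ̃ p - λ`, this simplifies to
`λ S₀ ^ m / (λ - m μ̃ - m² σ² / 2)`; the same factorisation shows `m < α ↔ m μ̃ + m² σ² / 2 < λ`.
-/

open MeasureTheory Real Set Filter

theorem rpow_mul_div_rpow {S x : ℝ} (hS : 0 < S) (hx : 0 < x) (p r : ℝ) :
    x ^ p * (x / S) ^ r = S ^ (-r) * x ^ (p + r) := by
  rw [div_rpow hx.le hS.le, rpow_add hx, rpow_neg hS.le]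
  ring

theorem integrableOn_Ioc_rpow_mul_div_rpow {S p b : ℝ} (hS : 0 < S) (h : 0 < p + b) :
    IntegrableOn (fun x => x ^ p * (x / S) ^ (b - 1)) (Ioc 0 S) := by
  have : IntegrableOn (fun x : ℝ => x ^ (p + (b - 1))) (Ioc 0 S) :=
    (intervalIntegrable_iff_integrableOn_Ioc_of_le hS.le).mp
      (intervalIntegral.intervalIntegrable_rpow' (by linarith))
  refine IntegrableOn.congr_fun (this.const_mul (S ^ (-(b - 1)))) (fun x hx => ?_) measurableSet_Ioc
  exact (rpow_mul_div_rpow hS hx.1 p _).symm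

theorem integral_Ioc_rpow_mul_div_rpow {S p b : ℝ} (hS : 0 < S) (h : 0 < p + b) :
    ∫ x in Ioc 0 S, x ^ p * (x / S) ^ (b - 1) = S ^ (p + 1) / (p + b) := by
  rw [setIntegral_congr_fun measurableSet_Ioc fun x hx => rpow_mul_div_rpow hS hx.1 p _,
    integral_const_mul, ← intervalIntegral.integral_of_le hS.le,
    integral_rpow (Or.inl (by linarith)), zero_rpow (by linarith), sub_zero, mul_div_assoc',
    ← rpow_add hS]
  ring_nf

theorem integrableOn_Ioi_rpow_mul_div_rpow_iff {S p a : ℝ} (hS : 0 < S) :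
    IntegrableOn (fun x => x ^ p * (x / S) ^ (-a - 1)) (Ioi S) ↔ p < a := by
  have hc : IsUnit (S ^ (-(-a - 1))) := (rpow_pos_of_pos hS _).ne'.isUnit
  rw [integrableOn_congr_fun (s := Ioi S)
      (fun x hx => rpow_mul_div_rpow hS (hS.trans hx) p (-a - 1)) measurableSet_Ioi,
    IntegrableOn, integrable_const_mul_iff hc, ← IntegrableOn, integrableOn_Ioi_rpow_iff hS]
  constructor <;> intro h <;> linarith

theorem integral_Ioi_rpow_mul_div_rpow {S p a : ℝ} (hS : 0 < S) (h : p < a) :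
    ∫ x in Ioi S, x ^ p * (x / S) ^ (-a - 1) = S ^ (p + 1) / (a - p) := by
  rw [setIntegral_congr_fun measurableSet_Ioi fun x hx => rpow_mul_div_rpow hS (hS.trans hx) p _,
    integral_const_mul, integral_Ioi_rpow_of_lt (by linarith) hS, mul_div_assoc', mul_neg,
    ← rpow_add hS, neg_div, ← div_neg]
  ring_nf

noncomputable def doubleParetoShape (a b S x : ℝ) : ℝ :=
  if S ≤ x then (x / S) ^ (-a - 1) else (x / S) ^ (b - 1)

section doubleParetoShape

variable {a b S p : ℝ}

theorem doubleParetoShape_of_le {x : ℝ} (hS : 0 < S) (hx : x ≤ S) :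
    doubleParetoShape a b S x = (x / S) ^ (b - 1) := by
  rcases hx.lt_or_eq with hx | rfl
  · exact if_neg hx.not_ge
  · simp [doubleParetoShape, div_self hS.ne']

theorem doubleParetoShape_of_lt {x : ℝ} (hx : S < x) :
    doubleParetoShape a b S x = (x / S) ^ (-a - 1) :=
  if_pos hx.le

theorem integrableOn_Ioc_rpow_mul_doubleParetoShape (hS : 0 < S) (h : 0 < p + b) :
    IntegrableOn (fun x => x ^ p * doubleParetoShape a b S x) (Ioc 0 S) :=
  (integrableOn_Ioc_rpow_mul_div_rpow hS h).congr_fun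
    (fun x hx => by rw [doubleParetoShape_of_le hS hx.2]) measurableSet_Ioc

theorem integrableOn_Ioi_rpow_mul_doubleParetoShape_iff (hS : 0 < S) :
    IntegrableOn (fun x => x ^ p * doubleParetoShape a b S x) (Ioi S) ↔ p < a := by
  rw [← integrableOn_Ioi_rpow_mul_div_rpow_iff hS]
  exact integrableOn_congr_fun (fun x hx => by rw [doubleParetoShape_of_lt hx]) measurableSet_Ioi

theorem integrableOn_rpow_mul_doubleParetoShape_iff (hS : 0 < S) (h : 0 < p + b) :
    IntegrableOn (fun x => x ^ p * doubleParetoShape a b S x) (Ioi 0) ↔ p < a := by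
  rw [← Ioc_union_Ioi_eq_Ioi hS.le, integrableOn_union,
    integrableOn_Ioi_rpow_mul_doubleParetoShape_iff hS]
  exact and_iff_right (integrableOn_Ioc_rpow_mul_doubleParetoShape hS h)

theorem integral_rpow_mul_doubleParetoShape (hS : 0 < S) (hb : 0 < p + b) (ha : p < a) :
    ∫ x in Ioi 0, x ^ p * doubleParetoShape a b S x = S ^ (p + 1) * (1 / (p + b) + 1 / (a - p)) := by
  rw [← Ioc_union_Ioi_eq_Ioi hS.le, setIntegral_union Ioc_disjoint_Ioi_same measurableSet_Ioi
      (integrableOn_Ioc_rpow_mul_doubleParetoShape hS hb)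
      ((integrableOn_Ioi_rpow_mul_doubleParetoShape_iff hS).2 ha),
    setIntegral_congr_fun measurableSet_Ioc fun x hx => by rw [doubleParetoShape_of_le hS hx.2],
    setIntegral_congr_fun measurableSet_Ioi fun x hx => by rw [doubleParetoShape_of_lt hx],
    integral_Ioc_rpow_mul_div_rpow hS hb, integral_Ioi_rpow_mul_div_rpow hS ha]
  ring

end doubleParetoShape

section parameters

variable {lam μt σ : ℝ}

theorem abs_lt_sqrt_sq_add (hlam : 0 < lam) (hσ : 0 < σ) :
    |μt| < √(μt ^ 2 + 2 * σ ^ 2 * lam) := by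
  rw [← sqrt_sq_eq_abs]
  exact sqrt_lt_sqrt (sq_nonneg _) (by nlinarith [mul_pos (pow_pos hσ 2) hlam])

variable {s : ℝ} (hσ : σ ≠ 0) (hs : s ^ 2 = μt ^ 2 + 2 * σ ^ 2 * lam)
include hσ hs

theorem add_mul_sub_eq_of_sq_eq (p : ℝ) :
    (p + (μt + s) / σ ^ 2) * ((-μt + s) / σ ^ 2 - p) =
      2 * (lam - p * μt - p ^ 2 * σ ^ 2 / 2) / σ ^ 2 := by
  field_simp
  linear_combination hs

theorem one_div_add_add_one_div_sub_eq_of_sq_eq {p : ℝ} (hb : p + (μt + s) / σ ^ 2 ≠ 0)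
    (ha : (-μt + s) / σ ^ 2 - p ≠ 0) :
    1 / (p + (μt + s) / σ ^ 2) + 1 / ((-μt + s) / σ ^ 2 - p) =
      s / (lam - p * μt - p ^ 2 * σ ^ 2 / 2) := by
  rw [div_add_div _ _ hb ha, add_mul_sub_eq_of_sq_eq hσ hs]
  field_simp
  ring

end parameters

theorem stmt11 (lam S₀ μt σ : ℝ) (hlam : 0 < lam) (hS : 0 < S₀) (hσ : 0 < σ) (m : ℕ) :
    let α := (-μt + Real.sqrt (μt ^ 2 + 2 * σ ^ 2 * lam)) / σ ^ 2
    let β := (μt + Real.sqrt (μt ^ 2 + 2 * σ ^ 2 * lam)) / σ ^ 2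
    let C := lam / (S₀ * Real.sqrt (μt ^ 2 + 2 * σ ^ 2 * lam))
    let f : ℝ → ℝ := fun x =>
      if S₀ ≤ x then C * (x / S₀) ^ (-α - 1) else C * (x / S₀) ^ (β - 1)
    ((m : ℝ) * μt + (m : ℝ) ^ 2 * σ ^ 2 / 2 < lam →
        ∫ x in Set.Ioi (0:ℝ), x ^ m * f x =
          lam * S₀ ^ m / (lam - (m : ℝ) * μt - (m : ℝ) ^ 2 * σ ^ 2 / 2)) ∧
      (IntegrableOn (fun x => x ^ m * f x) (Set.Ioi 0) ↔ (m : ℝ) < α) := by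
  intro α β C f
  set s := √(μt ^ 2 + 2 * σ ^ 2 * lam)
  have hs : s ^ 2 = μt ^ 2 + 2 * σ ^ 2 * lam := sq_sqrt (by positivity)
  have hμs := abs_lt_sqrt_sq_add (μt := μt) hlam hσ
  have hs_pos : 0 < s := by linarith [abs_nonneg μt]
  have hσ2 : 0 < σ ^ 2 := by positivity
  have hmβ : 0 < (m : ℝ) + β := by
    have : 0 < β := div_pos (by linarith [neg_abs_le μt]) hσ2
    positivity
  have hlt_α : (m : ℝ) < α ↔ (m : ℝ) * μt + (m : ℝ) ^ 2 * σ ^ 2 / 2 < lam := by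
    rw [← sub_pos, ← mul_pos_iff_of_pos_left hmβ, add_mul_sub_eq_of_sq_eq hσ.ne' hs,
      div_pos_iff_of_pos_right hσ2]
    constructor <;> intro h <;> linarith
  have hf : (fun x => x ^ m * f x) = fun x => C * (x ^ (m : ℝ) * doubleParetoShape α β S₀ x) := by
    funext x
    have hfx : f x = C * doubleParetoShape α β S₀ x := (mul_ite _ _ _ _).symm
    rw [rpow_natCast, hfx, mul_left_comm]
  refine ⟨fun hm => ?_, ?_⟩
  · rw [hf, integral_const_mul, integral_rpow_mul_doubleParetoShape hS hmβ (hlt_α.2 hm),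
      one_div_add_add_one_div_sub_eq_of_sq_eq hσ.ne' hs hmβ.ne' (sub_pos.2 (hlt_α.2 hm)).ne',
      rpow_add_one hS.ne', rpow_natCast]
    rw [show C = lam / (S₀ * s) from rfl]
    field_simp
  · rw [hf, IntegrableOn, integrable_const_mul_iff, ← IntegrableOn,
      integrableOn_rpow_mul_doubleParetoShape_iff hS hmβ]
    exact (div_pos hlam (mul_pos hS hs_pos)).ne'.isUnit
end

section
/- Let T ~ Gam(k, λ) with k, λ > 0, let S₀ > 0, μ̃ ∈ ℝ, σ > 0. Then the density of S_T is f(x) = (2 λ^k / (√(2π) Γ(k) σ (μ̃² + 2σ²λ)^{(2k-1)/4} S₀)) · (x/S₀)^{μ̃/σ² - 1} · |ln(x/S₀)|^{k-1/2} · K_{k-1/2}((√(μ̃² + 2σ²λ)/σ²) |ln(x/S₀)|) for x > 0, x ≠ S₀, where K_ν is the modified Bessel function of the second kind. -/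
/-! Given `T = t`, `log S_T` is Gaussian with mean `log S₀ + μ̃ t` and variance `σ² t`. Completing
the square in the exponent writes the mixture integrand as a constant times
`t ^ (k - 3/2) * exp (-a t - b / t)` with `a = (μ̃² + 2 σ² λ) / (2 σ²)` and
`b = log (x / S₀)² / (2 σ²)`, and the substitution `t = 2 √(b / a) u` turns
`∫₀^∞ t ^ (ν - 1) exp (-a t - b / t) dt` into the integral defining `K_ν (2 √(a b))`. -/

open MeasureTheory Real Set Filter

lemma integral_Ioi_eq_mul_integral_comp_mul (g : ℝ → ℝ) {r : ℝ} (hr : 0 < r) :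
    ∫ t in Ioi (0:ℝ), g t = r * ∫ s in Ioi (0:ℝ), g (r * s) := by
  rw [integral_comp_mul_left_Ioi g 0 hr, mul_zero, smul_eq_mul, mul_inv_cancel_left₀ hr.ne']

lemma integral_rpow_mul_exp_neg_mul_sub_div (ν : ℝ) {a b : ℝ} (ha : 0 < a) (hb : 0 < b) :
    ∫ t in Ioi (0:ℝ), t ^ (ν - 1) * exp (-(a * t) - b / t) =
      2 * √(b / a) ^ ν * besselK ν (2 * √(a * b)) := by
  obtain ⟨s, hs, rfl⟩ : ∃ s, 0 < s ∧ b = a * s ^ 2 :=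
    ⟨√(b / a), sqrt_pos.mpr (div_pos hb ha), by rw [sq_sqrt (div_pos hb ha).le]; field_simp⟩
  have hsqrt_div : √(a * s ^ 2 / a) = s := by
    rw [mul_div_cancel_left₀ _ ha.ne', sqrt_sq hs.le]
  have hsqrt_mul : √(a * (a * s ^ 2)) = a * s := by
    rw [← sqrt_sq (mul_pos ha hs).le]; ring_nf
  have hsubst : ∀ u ∈ Ioi (0:ℝ),
      (2 * s * u) ^ (ν - 1) * exp (-(a * (2 * s * u)) - a * s ^ 2 / (2 * s * u)) =
      (2 * s) ^ (ν - 1) * (u ^ (ν - 1) * exp (-(2 * (a * s)) * u - 2 * (a * s) / (4 * u))) := by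
    intro u hu
    rw [mul_rpow (by positivity) (le_of_lt hu), mul_assoc]
    congr 3
    field_simp
    ring
  rw [integral_Ioi_eq_mul_integral_comp_mul _ (by positivity : 0 < 2 * s),
    setIntegral_congr_fun measurableSet_Ioi hsubst, integral_const_mul, hsqrt_div, hsqrt_mul,
    besselK, mul_rpow two_pos.le hs.le, rpow_sub_one two_pos.ne', rpow_sub_one hs.ne']
  generalize ∫ u in Ioi (0:ℝ), u ^ (ν - 1) * exp (-(2 * (a * s)) * u - 2 * (a * s) / (4 * u)) = J
  field_simp

lemma integral_rpow_mul_exp_neg_mul_sub_sq_div (ν : ℝ) {M σ y : ℝ} (hM : 0 < M) (hσ : σ ≠ 0)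
    (hy : y ≠ 0) :
    ∫ t in Ioi (0:ℝ), t ^ (ν - 1) * exp (-(M / (2 * σ ^ 2) * t) - y ^ 2 / (2 * σ ^ 2) / t) =
      2 * |y| ^ ν / M ^ (ν / 2) * besselK ν (√M / σ ^ 2 * |y|) := by
  have hmul : M / (2 * σ ^ 2) * (y ^ 2 / (2 * σ ^ 2)) = (√M * |y| / (2 * σ ^ 2)) ^ 2 := by
    rw [div_pow, mul_pow, sq_sqrt hM.le, sq_abs]; ring
  have hdiv : y ^ 2 / (2 * σ ^ 2) / (M / (2 * σ ^ 2)) = (|y| / √M) ^ 2 := by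
    rw [div_pow, sq_sqrt hM.le, sq_abs]; field_simp
  rw [integral_rpow_mul_exp_neg_mul_sub_div ν (by positivity) (by positivity), hmul, hdiv,
    sqrt_sq (by positivity), sqrt_sq (by positivity), div_rpow (abs_nonneg y) (sqrt_nonneg M),
    sqrt_eq_rpow, ← rpow_mul hM.le]
  ring_nf

lemma lognormalPdf_affine_mul_rpow_mul_exp (m μ σ lam k c x t : ℝ) (hσ : 0 < σ) (ht : 0 < t) :
    lognormalPdf (m + μ * t) (σ ^ 2 * t) x * (c * t ^ (k - 1) * exp (-lam * t)) =
      c * exp (μ * (log x - m) / σ ^ 2) / (√(2 * π) * σ * x) *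
        (t ^ (k - 1 / 2 - 1) * exp (-((μ ^ 2 + 2 * σ ^ 2 * lam) / (2 * σ ^ 2) * t) -
          (log x - m) ^ 2 / (2 * σ ^ 2) / t)) := by
  have hsqrt : √(2 * π * (σ ^ 2 * t)) = √(2 * π) * σ * √t := by
    rw [sqrt_mul (by positivity), sqrt_mul (sq_nonneg σ), sqrt_sq hσ.le, mul_assoc]
  have hpow : t ^ (k - 1) = √t * t ^ (k - 1 / 2 - 1) := by
    rw [sqrt_eq_rpow, ← rpow_add ht]; ring_nf
  have hexp : exp (-(log x - (m + μ * t)) ^ 2 / (2 * (σ ^ 2 * t))) * exp (-lam * t) =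
      exp (μ * (log x - m) / σ ^ 2) * exp (-((μ ^ 2 + 2 * σ ^ 2 * lam) / (2 * σ ^ 2) * t) -
          (log x - m) ^ 2 / (2 * σ ^ 2) / t) := by
    rw [← exp_add, ← exp_add]
    congr 1
    field_simp
    ring
  calc _ = c * t ^ (k - 1 / 2 - 1) / (√(2 * π) * σ * x) *
        (exp (-(log x - (m + μ * t)) ^ 2 / (2 * (σ ^ 2 * t))) * exp (-lam * t)) := by
        rw [lognormalPdf, hsqrt, hpow]
        field_simp
    _ = _ := by rw [hexp]; ring

theorem stmt14_general (k lam S₀ μt σ x : ℝ) (hlam : 0 < lam) (hS : 0 < S₀)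
    (hσ : 0 < σ) (hx : 0 < x) (hxS : x ≠ S₀) :
    (∫ t in Set.Ioi (0:ℝ), lognormalPdf (Real.log S₀ + μt * t) (σ ^ 2 * t) x *
        (lam ^ k / Real.Gamma k * t ^ (k - 1) * Real.exp (-lam * t))) =
      2 * lam ^ k /
          (Real.sqrt (2 * π) * Real.Gamma k * σ *
            (μt ^ 2 + 2 * σ ^ 2 * lam) ^ ((2 * k - 1) / 4) * S₀) *
        (x / S₀) ^ (μt / σ ^ 2 - 1) * |Real.log (x / S₀)| ^ (k - 1/2) *
        besselK (k - 1/2)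
          (Real.sqrt (μt ^ 2 + 2 * σ ^ 2 * lam) / σ ^ 2 * |Real.log (x / S₀)|) := by
  have hlog : log x - log S₀ = log (x / S₀) := (log_div hx.ne' hS.ne').symm
  have hlog_ne : log (x / S₀) ≠ 0 :=
    log_ne_zero_of_pos_of_ne_one (div_pos hx hS) (by rwa [ne_eq, div_eq_one_iff_eq hS.ne'])
  rw [setIntegral_congr_fun measurableSet_Ioi
      fun t ht ↦ lognormalPdf_affine_mul_rpow_mul_exp _ _ _ _ _ _ _ t hσ ht,
    integral_const_mul, hlog, integral_rpow_mul_exp_neg_mul_sub_sq_div _ (by positivity) hσ.ne'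
      hlog_ne, rpow_sub_one (div_pos hx hS).ne', rpow_def_of_pos (div_pos hx hS),
    show (k - 1 / 2) / 2 = (2 * k - 1) / 4 by ring]
  field_simp

theorem stmt14 (k lam S₀ μt σ x : ℝ) (hk : 0 < k) (hlam : 0 < lam) (hS : 0 < S₀)
    (hσ : 0 < σ) (hx : 0 < x) (hxS : x ≠ S₀) :
    (∫ t in Set.Ioi (0:ℝ), lognormalPdf (Real.log S₀ + μt * t) (σ ^ 2 * t) x *
        (lam ^ k / Real.Gamma k * t ^ (k - 1) * Real.exp (-lam * t))) =
      2 * lam ^ k /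
          (Real.sqrt (2 * π) * Real.Gamma k * σ *
            (μt ^ 2 + 2 * σ ^ 2 * lam) ^ ((2 * k - 1) / 4) * S₀) *
        (x / S₀) ^ (μt / σ ^ 2 - 1) * |Real.log (x / S₀)| ^ (k - 1/2) *
        besselK (k - 1/2)
          (Real.sqrt (μt ^ 2 + 2 * σ ^ 2 * lam) / σ ^ 2 * |Real.log (x / S₀)|) :=
  stmt14_general k lam S₀ μt σ x hlam hS hσ hx hxS
end

section
/- Let f_Gam(x) denote the density of S_T with T gamma-distributed Gam(k, λ) (and parameters μ̃ ∈ ℝ, σ > 0, S₀ > 0). Then as x → ∞, f_Gam(x) is asymptotically equivalent to (λ^k/(Γ(k)(μ̃² + 2σ²λ)^{k/2} S₀)) (x/S₀)^{-α-1} (ln(x/S₀))^{k-1}, where α = (-μ̃ + √(μ̃² + 2σ²λ))/σ². -/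
/-!
The substitution `t = 1/2 + s/√z` in the integral defining `K_ν(z)` gives
`√z e^z K_ν(z) = 2^(ν-1) ∫ t^(ν-1) e^(-s²/t) ds` with `t = 1/2 + s/√z` (the integrand
vanishing where `t ≤ 0`). As `z → ∞` the integrand tends to `(1/2)^(ν-1) e^(-2s²)` and stays
below a multiple of `(1 + s²)⁻¹`, so dominated convergence gives `√z e^z K_ν(z) → √(π/2)`.
For `z = c |log(x/S₀)|`, `c = √(μ̃² + 2σ²λ)/σ²`, the quotient in the theorem is exactly
`√z e^z K_{k-1/2}(z) / √(π/2)`: as `μ̃/σ² + α = c`, the powers of `x/S₀` combine to `e^z`, and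
the constants to `√c / √(π/2)`.
-/

open MeasureTheory Real Set Filter

open Topology

lemma rpow_mul_exp_neg_mul_le {p c u : ℝ} (hp : 0 ≤ p) (hc : 0 < c) (hu : 0 ≤ u) :
    u ^ p * exp (-(c * u)) ≤ (p / c) ^ p := by
  have h := ProbabilityTheory.rpow_abs_le_mul_exp_abs u hp hc.ne'
  rw [abs_of_nonneg hu, abs_of_pos hc] at h
  rwa [exp_neg, ← div_eq_mul_inv, div_le_iff₀ (exp_pos _)]

lemma rpow_le_rpow_abs_add_inv_rpow_abs {t : ℝ} (ht : 0 < t) (a : ℝ) :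
    t ^ a ≤ t ^ |a| + t⁻¹ ^ |a| := by
  rcases le_total 1 t with h | h
  · exact le_add_of_le_of_nonneg (rpow_le_rpow_of_exponent_le h (le_abs_self a)) (by positivity)
  · have hle := rpow_le_rpow_of_exponent_ge ht h (neg_abs_le a)
    rw [rpow_neg ht.le, ← inv_rpow ht.le] at hle
    exact le_add_of_nonneg_of_le (by positivity) hle

lemma exists_rpow_mul_exp_neg_sq_div_two_mul_le (a : ℝ) :
    ∃ C, ∀ t > 0, t ^ a * exp (-((t - 1 / 2) ^ 2 / (2 * t))) ≤ C := by
  refine ⟨exp (1 / 2) * ((|a| / (1 / 2)) ^ |a| + (|a| / (1 / 8)) ^ |a|), fun t ht => ?_⟩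
  have hsplit : exp (-((t - 1 / 2) ^ 2 / (2 * t))) =
      exp (1 / 2) * (exp (-(1 / 2 * t)) * exp (-(1 / 8 * t⁻¹))) := by
    rw [← exp_add, ← exp_add]; congr 1; field_simp; ring
  have hA := rpow_mul_exp_neg_mul_le (abs_nonneg a) (by norm_num : (0:ℝ) < 1 / 2) ht.le
  have hB :=
    rpow_mul_exp_neg_mul_le (abs_nonneg a) (by norm_num : (0:ℝ) < 1 / 8) (inv_pos.2 ht).le
  have h1 : exp (-(1 / 2 * t)) ≤ 1 := exp_le_one_iff.2 (by linarith)
  have h2 : exp (-(1 / 8 * t⁻¹)) ≤ 1 := exp_le_one_iff.2 (by have := inv_pos.2 ht; linarith)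
  calc t ^ a * exp (-((t - 1 / 2) ^ 2 / (2 * t)))
      ≤ (t ^ |a| + t⁻¹ ^ |a|) *
          (exp (1 / 2) * (exp (-(1 / 2 * t)) * exp (-(1 / 8 * t⁻¹)))) := by
        rw [hsplit]; gcongr; exact rpow_le_rpow_abs_add_inv_rpow_abs ht a
    _ = exp (1 / 2) * (t ^ |a| * exp (-(1 / 2 * t)) * exp (-(1 / 8 * t⁻¹)) +
          t⁻¹ ^ |a| * exp (-(1 / 8 * t⁻¹)) * exp (-(1 / 2 * t))) := by ring
    _ ≤ exp (1 / 2) * ((|a| / (1 / 2)) ^ |a| * 1 + (|a| / (1 / 8)) ^ |a| * 1) := by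
        gcongr
    _ = _ := by ring

lemma exp_neg_sq_div_two_mul_le {s t : ℝ} (ht : 0 < t) (hts : t ≤ 1 / 2 + |s|) :
    exp (-(s ^ 2 / (2 * t))) ≤ 17 * exp (1 / 4) * (1 + s ^ 2)⁻¹ := by
  have hlin : |s| / 2 - 1 / 4 ≤ s ^ 2 / (2 * t) := by
    rw [le_div_iff₀ (by positivity)]
    nlinarith [sq_abs s, abs_nonneg s]
  have hsq : |s| ^ (2:ℝ) * exp (-(1 / 2 * |s|)) ≤ 16 := by
    have := rpow_mul_exp_neg_mul_le (by norm_num : (0:ℝ) ≤ 2) (by norm_num : (0:ℝ) < 1 / 2)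
      (abs_nonneg s)
    norm_num at this ⊢; exact this
  have hexp : exp (-(s ^ 2 / (2 * t))) ≤ exp (1 / 4) * exp (-(1 / 2 * |s|)) := by
    rw [← exp_add]; gcongr; linarith
  rw [rpow_two, sq_abs] at hsq
  have hone : exp (-(1 / 2 * |s|)) ≤ 1 := exp_le_one_iff.2 (by have := abs_nonneg s; linarith)
  rw [le_mul_inv_iff₀ (by positivity)]
  calc exp (-(s ^ 2 / (2 * t))) * (1 + s ^ 2)
      ≤ exp (1 / 4) * exp (-(1 / 2 * |s|)) * (1 + s ^ 2) := by gcongr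
    _ = exp (1 / 4) * (exp (-(1 / 2 * |s|)) + s ^ 2 * exp (-(1 / 2 * |s|))) := by ring
    _ ≤ exp (1 / 4) * (1 + 16) := by gcongr
    _ = 17 * exp (1 / 4) := by ring

noncomputable def besselKSubstKernel (ν s t : ℝ) : ℝ :=
  if 0 < t then t ^ (ν - 1) * exp (-s ^ 2 / t) else 0

lemma besselKSubstKernel_nonneg (ν s t : ℝ) : 0 ≤ besselKSubstKernel ν s t := by
  unfold besselKSubstKernel; split_ifs <;> positivity

lemma measurable_besselKSubstKernel (ν w : ℝ) :
    Measurable fun s => besselKSubstKernel ν s (1 / 2 + s / w) := by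
  unfold besselKSubstKernel
  exact Measurable.ite (measurableSet_lt measurable_const (by fun_prop)) (by fun_prop)
    measurable_const

lemma besselKSubstKernel_le {ν w s C : ℝ} (hw : 1 ≤ w)
    (hC : ∀ t > 0, t ^ (ν - 1) * exp (-((t - 1 / 2) ^ 2 / (2 * t))) ≤ C) :
    besselKSubstKernel ν s (1 / 2 + s / w) ≤ C * (17 * exp (1 / 4) * (1 + s ^ 2)⁻¹) := by
  have hC0 : 0 ≤ C := (by positivity : (0:ℝ) ≤ 1 ^ (ν - 1) * exp _).trans (hC 1 one_pos)
  unfold besselKSubstKernel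
  split_ifs with ht
  · set t := 1 / 2 + s / w with htdef
    have hw0 : 0 < w := one_pos.trans_le hw
    have hsw : |s / w| ≤ |s| := by
      rw [abs_div, abs_of_pos hw0]; exact div_le_self (abs_nonneg s) hw
    have hcentre : (t - 1 / 2) ^ 2 ≤ s ^ 2 := by
      rw [htdef, add_sub_cancel_left, ← sq_abs, ← sq_abs s]
      exact pow_le_pow_left₀ (abs_nonneg _) hsw 2
    have htail : t ≤ 1 / 2 + |s| := by
      rw [htdef]; linarith [le_abs_self (s / w)]
    -- half of the Gaussian factor controls `t ^ (ν - 1)`, the other half gives decay in `s`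
    have hhalf : exp (-s ^ 2 / t) = exp (-(s ^ 2 / (2 * t))) * exp (-(s ^ 2 / (2 * t))) := by
      rw [← exp_add]; congr 1; field_simp; ring
    calc t ^ (ν - 1) * exp (-s ^ 2 / t)
        = t ^ (ν - 1) * exp (-(s ^ 2 / (2 * t))) * exp (-(s ^ 2 / (2 * t))) := by
          rw [hhalf, mul_assoc]
      _ ≤ t ^ (ν - 1) * exp (-((t - 1 / 2) ^ 2 / (2 * t))) *
            (17 * exp (1 / 4) * (1 + s ^ 2)⁻¹) := by
          gcongr
          exact exp_neg_sq_div_two_mul_le ht htail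
      _ ≤ C * (17 * exp (1 / 4) * (1 + s ^ 2)⁻¹) := by
          gcongr; exact hC t ht
  · positivity

lemma tendsto_besselKSubstKernel (ν s : ℝ) :
    Tendsto (fun w => besselKSubstKernel ν s (1 / 2 + s / w)) atTop
      (𝓝 ((1 / 2) ^ (ν - 1) * exp (-2 * s ^ 2))) := by
  have hcont : ContinuousAt (besselKSubstKernel ν s) (1 / 2) := by
    have heq :
        (fun t => t ^ (ν - 1) * exp (-s ^ 2 / t)) =ᶠ[𝓝 (1 / 2)] besselKSubstKernel ν s := by
      filter_upwards [Ioi_mem_nhds (by norm_num : (0:ℝ) < 1 / 2)] with t ht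
      exact (if_pos ht).symm
    refine ContinuousAt.congr ?_ heq
    fun_prop (disch := norm_num)
  have harg : Tendsto (fun w => 1 / 2 + s / w) atTop (𝓝 (1 / 2)) := by
    simpa using (tendsto_const_nhds (x := (1 / 2 : ℝ))).add
      ((tendsto_const_nhds (x := s)).div_atTop tendsto_id)
  have hval : besselKSubstKernel ν s (1 / 2) = (1 / 2) ^ (ν - 1) * exp (-2 * s ^ 2) := by
    rw [besselKSubstKernel, if_pos (by norm_num)]; congr 2; ring
  rw [← hval]; exact hcont.tendsto.comp harg

lemma tendsto_integral_besselKSubstKernel (ν : ℝ) :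
    Tendsto (fun w => ∫ s, besselKSubstKernel ν s (1 / 2 + s / w)) atTop
      (𝓝 ((1 / 2) ^ (ν - 1) * √(π / 2))) := by
  obtain ⟨C, hC⟩ := exists_rpow_mul_exp_neg_sq_div_two_mul_le (ν - 1)
  have hlim :
      ∫ s, (1 / 2 : ℝ) ^ (ν - 1) * exp (-2 * s ^ 2) = (1 / 2) ^ (ν - 1) * √(π / 2) := by
    rw [integral_const_mul, integral_gaussian]
  rw [← hlim]
  refine tendsto_integral_filter_of_dominated_convergence
    (fun s => C * (17 * exp (1 / 4) * (1 + s ^ 2)⁻¹))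
    (.of_forall fun w => (measurable_besselKSubstKernel ν w).aestronglyMeasurable) ?_
    ((integrable_inv_one_add_sq.const_mul _).const_mul _)
    (.of_forall fun s => tendsto_besselKSubstKernel ν s)
  filter_upwards [eventually_ge_atTop 1] with w hw
  refine .of_forall fun s => ?_
  rw [norm_of_nonneg (besselKSubstKernel_nonneg ..)]
  exact besselKSubstKernel_le hw hC

lemma mul_exp_mul_besselK_sq_eq (ν : ℝ) {w : ℝ} (hw : 0 < w) :
    w * exp (w ^ 2) * besselK ν (w ^ 2) =
      2 ^ (ν - 1) * ∫ s, besselKSubstKernel ν s (1 / 2 + s / w) := by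
  set g := (Ioi (0:ℝ)).indicator
    (fun t => exp (w ^ 2) * (t ^ (ν - 1) * exp (-w ^ 2 * t - w ^ 2 / (4 * t)))) with hg
  have hpoint : ∀ s, besselKSubstKernel ν s (1 / 2 + s / w) = g (1 / 2 + s / w) := by
    intro s
    by_cases ht : 0 < 1 / 2 + s / w
    · rw [hg, indicator_of_mem (show 1 / 2 + s / w ∈ Ioi 0 from ht), besselKSubstKernel,
        if_pos ht, mul_left_comm, ← exp_add]
      have hsum : w + s * 2 ≠ 0 := by
        have := mul_pos (mul_pos two_pos hw) ht; field_simp at this; linarith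
      congr 2
      field_simp
      ring
    · rw [hg, indicator_of_notMem (show 1 / 2 + s / w ∉ Ioi 0 from ht), besselKSubstKernel,
        if_neg ht]
  have hscale : ∫ s, g (1 / 2 + s / w) = w * ∫ t, g t := by
    rw [Measure.integral_comp_div (fun y => g (1 / 2 + y)) w, integral_add_left_eq_self,
      abs_of_pos hw, smul_eq_mul]
  simp_rw [hpoint, hscale, hg, integral_indicator measurableSet_Ioi, integral_const_mul, besselK]
  ring

lemma tendsto_sqrt_mul_exp_mul_besselK (ν : ℝ) :
    Tendsto (fun z => √z * exp z * besselK ν z) atTop (𝓝 √(π / 2)) := by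
  have h := ((tendsto_integral_besselKSubstKernel ν).comp tendsto_sqrt_atTop).const_mul
    ((2:ℝ) ^ (ν - 1))
  rw [← mul_assoc, ← mul_rpow (by norm_num) (by norm_num), mul_one_div_cancel two_ne_zero,
    one_rpow, one_mul] at h
  refine h.congr' ?_
  filter_upwards [eventually_gt_atTop 0] with z hz
  have := mul_exp_mul_besselK_sq_eq ν (sqrt_pos.2 hz)
  rw [sq_sqrt hz.le] at this
  exact this.symm

lemma density_div_asymptote_eq {P G S σ D k a b X : ℝ} (K : ℝ) (hP : P ≠ 0) (hG : G ≠ 0)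
    (hS : S ≠ 0) (hσ : 0 < σ) (hD : 0 < D) (hab : a - b = √D / σ ^ 2) (hX : 1 < X) :
    (2 * P / (√(2 * π) * G * σ * D ^ ((2 * k - 1) / 4) * S) * X ^ a *
          |log X| ^ (k - 1 / 2) * K) /
        (P / (G * D ^ (k / 2) * S) * X ^ b * log X ^ (k - 1)) =
      √(√D / σ ^ 2 * |log X|) * exp (√D / σ ^ 2 * |log X|) * K / √(π / 2) := by
  have hy : 0 < log X := log_pos hX
  have hXa : X ^ a = X ^ b * exp (√D / σ ^ 2 * log X) := by
    have hX0 : 0 < X := one_pos.trans hX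
    rw [rpow_def_of_pos hX0, rpow_def_of_pos hX0, ← exp_add, ← hab]
    ring_nf
  have hyk : log X ^ (k - 1 / 2) = log X ^ (k - 1) * √(log X) := by
    rw [sqrt_eq_rpow, ← rpow_add hy]; ring_nf
  have hDk : D ^ ((2 * k - 1) / 4) = D ^ (k / 2) / D ^ (1 / 4 : ℝ) := by
    rw [← rpow_sub hD]; ring_nf
  have hc : √(√D / σ ^ 2) = D ^ (1 / 4 : ℝ) / σ := by
    rw [sqrt_div (sqrt_nonneg D), sqrt_sq hσ.le, sqrt_eq_rpow, sqrt_eq_rpow, ← rpow_mul hD.le]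
    norm_num
  have hπ : √(2 * π) = 2 * √(π / 2) := by
    rw [show 2 * π = 2 ^ 2 * (π / 2) by ring, sqrt_mul (by norm_num), sqrt_sq (by norm_num)]
  have hπ0 : 0 < √(π / 2) := sqrt_pos.2 (by positivity)
  rw [abs_of_pos hy, hXa, hyk, hDk, sqrt_mul (by positivity : 0 ≤ √D / σ ^ 2), hc, hπ]
  field_simp

theorem stmt16 (k lam S₀ μt σ : ℝ) (hk : 0 < k) (hlam : 0 < lam) (hS : 0 < S₀)
    (hσ : 0 < σ) :
    let α := (-μt + Real.sqrt (μt ^ 2 + 2 * σ ^ 2 * lam)) / σ ^ 2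
    Filter.Tendsto (fun x =>
        (2 * lam ^ k /
            (Real.sqrt (2 * π) * Real.Gamma k * σ *
              (μt ^ 2 + 2 * σ ^ 2 * lam) ^ ((2 * k - 1) / 4) * S₀) *
          (x / S₀) ^ (μt / σ ^ 2 - 1) * |Real.log (x / S₀)| ^ (k - 1/2) *
          besselK (k - 1/2)
            (Real.sqrt (μt ^ 2 + 2 * σ ^ 2 * lam) / σ ^ 2 * |Real.log (x / S₀)|)) /
        (lam ^ k / (Real.Gamma k * (μt ^ 2 + 2 * σ ^ 2 * lam) ^ (k / 2) * S₀) *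
          (x / S₀) ^ (-α - 1) * Real.log (x / S₀) ^ (k - 1)))
      Filter.atTop (nhds 1) := by
  intro α
  have hD : 0 < μt ^ 2 + 2 * σ ^ 2 * lam := by positivity
  have hab : μt / σ ^ 2 - 1 - (-α - 1) = √(μt ^ 2 + 2 * σ ^ 2 * lam) / σ ^ 2 := by
    simp only [α]; field_simp; ring
  have hlog : Tendsto (fun x => |log (x / S₀)|) atTop atTop :=
    tendsto_abs_atTop_atTop.comp (tendsto_log_atTop.comp (tendsto_id.atTop_div_const hS))
  have hz := hlog.const_mul_atTop (by positivity : 0 < √(μt ^ 2 + 2 * σ ^ 2 * lam) / σ ^ 2)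
  have hlim := ((tendsto_sqrt_mul_exp_mul_besselK (k - 1 / 2)).comp hz).div_const √(π / 2)
  rw [div_self (sqrt_pos.2 (by positivity)).ne'] at hlim
  refine hlim.congr' ?_
  filter_upwards [eventually_gt_atTop S₀] with x hx
  exact (density_div_asymptote_eq _ (rpow_pos_of_pos hlam k).ne' (Gamma_pos_of_pos hk).ne'
    hS.ne' hσ hD hab ((one_lt_div hS).2 hx)).symm
end

section
/- Let T ~ GIG(ν, ψ, χ) with density g(t) = ((ψ/χ)^{ν/2}/(2 K_ν(√(ψχ)))) t^{ν-1} exp(-ψ t/2 - χ/(2t)) on (0,∞), where ψ, χ > 0 and ν ∈ ℝ, and let S₀ > 0, μ̃ ∈ ℝ, σ > 0. Then the density of S_T, f(x) = ∫₀^∞ f_LN(x; ln S₀ + μ̃ t, σ² t) g(t) dt, equals ((ψ/χ)^{ν/2}/(√(2π) σ K_ν(√(ψχ)) S₀)) (x/S₀)^{μ̃/σ² - 1} (A(x))^{(2ν-1)/4} (B)^{-(2ν-1)/4} K_{ν-1/2}(√(A(x) B)), where A(x) = (ln(x/S₀))²/σ² + χ and B = μ̃²/σ² + ψ. -/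
open MeasureTheory Real Set Filter

lemma scaleJ (a p q c : ℝ) (hc : 0 < c) :
    (∫ t in Set.Ioi (0:ℝ), t ^ a * Real.exp (-(p * t) - q / t))
      = c ^ (a + 1) * ∫ s in Set.Ioi (0:ℝ), s ^ a * Real.exp (-(p * c * s) - q / c / s) := by
  have h := MeasureTheory.integral_comp_mul_left_Ioi
      (fun t => t ^ a * Real.exp (-(p * t) - q / t)) 0 hc
  simp only [mul_zero, smul_eq_mul] at h
  have h2 : (∫ s in Set.Ioi (0:ℝ), (c * s) ^ a * Real.exp (-(p * (c * s)) - q / (c * s)))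
      = c ^ a * ∫ s in Set.Ioi (0:ℝ), s ^ a * Real.exp (-(p * c * s) - q / c / s) := by
    rw [← MeasureTheory.integral_const_mul]
    refine setIntegral_congr_fun measurableSet_Ioi (fun s hs => ?_)
    have hs0 : (0:ℝ) < s := hs
    rw [Real.mul_rpow hc.le hs0.le]
    have : -(p * (c * s)) - q / (c * s) = -(p * c * s) - q / c / s := by
      rw [div_div]; ring_nf
    rw [this]; ring
  rw [h2] at h
  have := congrArg (fun y => c * y) h
  rw [← mul_assoc, ← mul_assoc, mul_inv_cancel₀ hc.ne', one_mul] at this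
  rw [← this, Real.rpow_add hc, Real.rpow_one]; ring

theorem stmt19 (ν ψ χ S₀ μt σ x : ℝ) (hψ : 0 < ψ) (hχ : 0 < χ) (hS : 0 < S₀)
    (hσ : 0 < σ) (hx : 0 < x) :
    (∫ t in Set.Ioi (0:ℝ), lognormalPdf (Real.log S₀ + μt * t) (σ ^ 2 * t) x *
        ((ψ / χ) ^ (ν / 2) / (2 * besselK ν (Real.sqrt (ψ * χ))) * t ^ (ν - 1) *
          Real.exp (-ψ * t / 2 - χ / (2 * t)))) =
      (ψ / χ) ^ (ν / 2) / (Real.sqrt (2 * π) * σ * besselK ν (Real.sqrt (ψ * χ)) * S₀) *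
        (x / S₀) ^ (μt / σ ^ 2 - 1) *
        (Real.log (x / S₀) ^ 2 / σ ^ 2 + χ) ^ ((2 * ν - 1) / 4) *
        (μt ^ 2 / σ ^ 2 + ψ) ^ (-(2 * ν - 1) / 4) *
        besselK (ν - 1/2)
          (Real.sqrt ((Real.log (x / S₀) ^ 2 / σ ^ 2 + χ) * (μt ^ 2 / σ ^ 2 + ψ))) := by
  rcases eq_or_ne (besselK ν (Real.sqrt (ψ * χ))) 0 with hK | hK
  · simp [hK]
  set L : ℝ := Real.log (x / S₀) with hLdef
  have hL : Real.log x - Real.log S₀ = L := (Real.log_div hx.ne' hS.ne').symm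
  set A : ℝ := L ^ 2 / σ ^ 2 + χ with hAdef
  set B : ℝ := μt ^ 2 / σ ^ 2 + ψ with hBdef
  have hA : 0 < A := by positivity
  have hB : 0 < B := by positivity
  set z : ℝ := Real.sqrt (A * B) with hzdef
  have hz : 0 < z := Real.sqrt_pos.mpr (by positivity)
  set KK : ℝ := besselK ν (Real.sqrt (ψ * χ)) with hKK
  have hπ : (0:ℝ) < Real.sqrt (2 * π) := Real.sqrt_pos.mpr (by positivity)
  set D : ℝ := (ψ / χ) ^ (ν / 2) / (2 * KK) *
      (Real.exp (L * (μt / σ ^ 2)) / (Real.sqrt (2 * π) * σ * x)) with hDdef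
  -- Step 1: pointwise rewrite of the integrand
  have hkey : ∀ t ∈ Set.Ioi (0:ℝ),
      lognormalPdf (Real.log S₀ + μt * t) (σ ^ 2 * t) x *
        ((ψ / χ) ^ (ν / 2) / (2 * KK) * t ^ (ν - 1) *
          Real.exp (-ψ * t / 2 - χ / (2 * t)))
      = D * (t ^ (ν - 3/2) * Real.exp (-(B / 2 * t) - A / 2 / t)) := by
    intro t ht
    have ht0 : (0:ℝ) < t := ht
    have hst : (0:ℝ) < Real.sqrt t := Real.sqrt_pos.mpr ht0
    have h1 : Real.sqrt (2 * π * (σ ^ 2 * t)) = Real.sqrt (2 * π) * (σ * Real.sqrt t) := by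
      rw [Real.sqrt_mul (by positivity), Real.sqrt_mul (sq_nonneg σ), Real.sqrt_sq hσ.le]
    have h2 : t ^ (ν - 1) = t ^ (ν - 3/2) * Real.sqrt t := by
      rw [Real.sqrt_eq_rpow, ← Real.rpow_add ht0, show ν - 3/2 + 1/2 = ν - 1 by ring]
    have h3 : -(Real.log x - (Real.log S₀ + μt * t)) ^ 2 / (2 * (σ ^ 2 * t)) +
        (-ψ * t / 2 - χ / (2 * t)) = L * (μt / σ ^ 2) + (-(B / 2 * t) - A / 2 / t) := by
      have hx' : Real.log x = L + Real.log S₀ := by rw [← hL]; ring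
      rw [hx', hAdef, hBdef]
      field_simp
      ring
    have h4 : Real.exp (-(Real.log x - (Real.log S₀ + μt * t)) ^ 2 / (2 * (σ ^ 2 * t))) *
        Real.exp (-ψ * t / 2 - χ / (2 * t))
        = Real.exp (L * (μt / σ ^ 2)) * Real.exp (-(B / 2 * t) - A / 2 / t) := by
      rw [← Real.exp_add, ← Real.exp_add, h3]
    have h5 : Real.sqrt t / (Real.sqrt (2 * π) * (σ * Real.sqrt t) * x)
        = 1 / (Real.sqrt (2 * π) * σ * x) := by
      rw [div_eq_div_iff (by positivity) (by positivity)]; ring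
    rw [lognormalPdf, h1, h2]
    calc 1 / (Real.sqrt (2 * π) * (σ * Real.sqrt t) * x) *
          Real.exp (-(Real.log x - (Real.log S₀ + μt * t)) ^ 2 / (2 * (σ ^ 2 * t))) *
          ((ψ / χ) ^ (ν / 2) / (2 * KK) * (t ^ (ν - 3/2) * Real.sqrt t) *
            Real.exp (-ψ * t / 2 - χ / (2 * t)))
        = (ψ / χ) ^ (ν / 2) / (2 * KK) *
            (Real.sqrt t / (Real.sqrt (2 * π) * (σ * Real.sqrt t) * x)) * t ^ (ν - 3/2) *
            (Real.exp (-(Real.log x - (Real.log S₀ + μt * t)) ^ 2 / (2 * (σ ^ 2 * t))) *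
              Real.exp (-ψ * t / 2 - χ / (2 * t))) := by ring
      _ = D * (t ^ (ν - 3/2) * Real.exp (-(B / 2 * t) - A / 2 / t)) := by
          rw [h4, h5, hDdef]; ring
  rw [setIntegral_congr_fun measurableSet_Ioi hkey, MeasureTheory.integral_const_mul]
  -- Step 2: evaluate the integral via scaling
  have hc1 : 0 < Real.sqrt (A / B) := Real.sqrt_pos.mpr (by positivity)
  have hsA : Real.sqrt A * Real.sqrt A = A := Real.mul_self_sqrt hA.le
  have hsB : Real.sqrt B * Real.sqrt B = B := Real.mul_self_sqrt hB.le
  have hsA0 : (0:ℝ) < Real.sqrt A := Real.sqrt_pos.mpr hA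
  have hsB0 : (0:ℝ) < Real.sqrt B := Real.sqrt_pos.mpr hB
  have hzAB : z = Real.sqrt A * Real.sqrt B := by rw [hzdef, Real.sqrt_mul hA.le]
  have e1 : B / 2 * Real.sqrt (A / B) = z / 2 := by
    rw [Real.sqrt_div hA.le, hzAB, div_mul_div_comm,
      div_eq_div_iff (by positivity) two_ne_zero]
    linear_combination (-2 * Real.sqrt A) * hsB
  have e2 : A / 2 / Real.sqrt (A / B) = z / 2 := by
    rw [Real.sqrt_div hA.le, hzAB, div_div_eq_mul_div,
      div_eq_div_iff hsA0.ne' two_ne_zero]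
    linear_combination (-Real.sqrt B) * hsA
  rw [scaleJ (ν - 3/2) (B/2) (A/2) (Real.sqrt (A/B)) hc1, e1, e2]
  rw [scaleJ (ν - 3/2) (z/2) (z/2) 2 two_pos]
  have e3 : (∫ u in Set.Ioi (0:ℝ), u ^ (ν - 3/2) * Real.exp (-(z / 2 * 2 * u) - z / 2 / 2 / u))
      = ∫ u in Set.Ioi (0:ℝ), u ^ (ν - 3/2) * Real.exp (-z * u - z / (4 * u)) := by
    refine setIntegral_congr_fun measurableSet_Ioi (fun u hu => ?_)
    rw [show -(z / 2 * 2 * u) - z / 2 / 2 / u = -z * u - z / (4 * u) by ring]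
  rw [e3]
  have hbk : besselK (ν - 1/2) z
      = 2 ^ (ν - 3/2) * ∫ u in Set.Ioi (0:ℝ), u ^ (ν - 3/2) * Real.exp (-z * u - z / (4 * u)) := by
    rw [besselK, show ν - 1/2 - 1 = ν - 3/2 by ring]
  have hI : (∫ u in Set.Ioi (0:ℝ), u ^ (ν - 3/2) * Real.exp (-z * u - z / (4 * u)))
      = 2 ^ ((3:ℝ)/2 - ν) * besselK (ν - 1/2) z := by
    rw [hbk, ← mul_assoc, ← Real.rpow_add two_pos,
      show (3:ℝ)/2 - ν + (ν - 3/2) = 0 by ring, Real.rpow_zero, one_mul]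
  rw [hI]
  -- Step 3: final algebra
  have e4 : Real.sqrt (A / B) ^ (ν - 3/2 + 1) = A ^ ((2*ν-1)/4) * (B ^ ((2*ν-1)/4))⁻¹ := by
    rw [Real.sqrt_eq_rpow, show ν - 3/2 + 1 = ν - 1/2 by ring,
      ← Real.rpow_mul (by positivity : (0:ℝ) ≤ A / B),
      show (1/2) * (ν - 1/2) = (2*ν-1)/4 by ring,
      Real.div_rpow hA.le hB.le, div_eq_mul_inv]
  have e5 : (2:ℝ) ^ (ν - 3/2 + 1) * 2 ^ ((3:ℝ)/2 - ν) = 2 := by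
    rw [← Real.rpow_add two_pos, show ν - 3/2 + 1 + (3/2 - ν) = 1 by ring, Real.rpow_one]
  have hxS : 0 < x / S₀ := div_pos hx hS
  have hexp : Real.exp (L * (μt / σ ^ 2)) = (x / S₀) ^ (μt / σ ^ 2 - 1) * (x / S₀) := by
    have hxe : x / S₀ = Real.exp L := (Real.exp_log hxS).symm
    rw [Real.rpow_def_of_pos hxS, ← hLdef, hxe, ← Real.exp_add]
    congr 1; ring
  have hBe : (0:ℝ) < B ^ ((2*ν-1)/4) := Real.rpow_pos_of_pos hB _
  rw [show -(2*ν-1)/4 = -((2*ν-1)/4) by ring, Real.rpow_neg hB.le]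
  rw [hDdef, hexp, e4]
  rw [show (2:ℝ) ^ (ν - 3/2 + 1) * (2 ^ ((3:ℝ)/2 - ν) * besselK (ν - 1/2) z)
      = 2 * besselK (ν - 1/2) z by rw [← mul_assoc, e5]]
  field_simp
end
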